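/- arXiv:2602.06401 — 6 statements merged into one kernel-verified Lean document; each statement's English description precedes it below -/
import Mathlib

section
/- Let Y be a nonnegative real random variable admitting a Lebesgue density, let y* ≥ 0 and α₁ > 0 be such that E[e^{α₁ Y}] < ∞, and let Φ_Y(z) = E[e^{z Y}]. Assume the function u ↦ Φ_Y(α₁ − i u)/(α₁ − i u) is Lebesgue integrable on ℝ. Then P(Y > y*) = (1/π) · ∫₀^∞ Re( e^{−(α₁ − i u) y*} · Φ_Y(α₁ − i u) / (α₁ − i u) ) du. -/
open MeasureTheory ProbabilityTheory Complex Real Set Filter FourierTransform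

lemma aux_integrableOn_rexp_Iic {b : ℝ} (hz : 0 < b) (c : ℝ) :
    IntegrableOn (fun y : ℝ => Real.exp (b * y)) (Set.Iic c) := by
  rw [IntegrableOn, ← Measure.map_neg_eq_self (volume : Measure ℝ)]
  have m : MeasurableEmbedding fun x : ℝ => -x := (Homeomorph.neg ℝ).measurableEmbedding
  rw [m.restrict_map, m.integrable_map_iff]
  have h1 : IntegrableOn (fun x : ℝ => Real.exp (-b * x)) (Set.Ioi (-c)) :=
    exp_neg_integrableOn_Ioi (-c) hz
  have h2 : IntegrableOn (fun x : ℝ => Real.exp (-b * x)) (Set.Ici (-c)) :=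
    (integrableOn_Ici_iff_integrableOn_Ioi).2 h1
  simp only [neg_preimage, neg_Iic]
  refine h2.congr_fun (fun x _ => ?_) measurableSet_Ici
  simp [Function.comp, mul_comm, neg_mul, mul_neg]

lemma aux_integrableOn_cexp_Iic {z : ℂ} (hz : 0 < z.re) (c : ℝ) :
    IntegrableOn (fun y : ℝ => Complex.exp (z * y)) (Set.Iic c) := by
  have h0 : IntegrableOn (fun y : ℝ => Real.exp (z.re * y)) (Set.Iic c) :=
    aux_integrableOn_rexp_Iic hz c
  refine h0.integrable.mono' (Continuous.aestronglyMeasurable ?_) ?_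
  · exact Complex.continuous_exp.comp (continuous_const.mul Complex.continuous_ofReal)
  · filter_upwards with y
    rw [Complex.norm_exp]
    simp [Complex.mul_re]

lemma aux_integral_cexp_Iic {z : ℂ} (hz : 0 < z.re) (c : ℝ) :
    ∫ y in Set.Iic c, Complex.exp (z * y) = Complex.exp (z * c) / z := by
  have hz0 : z ≠ 0 := fun h => by simp [h] at hz
  have hderiv : ∀ x ∈ Set.Iic c,
      HasDerivAt (fun y : ℝ => Complex.exp (z * y) / z) (Complex.exp (z * x)) x := by
    intro x _
    have h1 : HasDerivAt (fun w : ℂ => Complex.exp (z * w)) (Complex.exp (z * x) * z) x := by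
      simpa [mul_comm, Function.comp_def] using
        (Complex.hasDerivAt_exp (z * x)).comp (x : ℂ) ((hasDerivAt_id (x : ℂ)).const_mul z)
    have h2 := (h1.comp_ofReal).div_const z
    simpa [mul_div_cancel_right₀ _ hz0] using h2
  have htends : Tendsto (fun y : ℝ => Complex.exp (z * y) / z) atBot (nhds 0) := by
    rw [tendsto_zero_iff_norm_tendsto_zero]
    have heq : (fun y : ℝ => ‖Complex.exp (z * y) / z‖)
        = fun y : ℝ => Real.exp (z.re * y) / ‖z‖ := by
      funext y
      rw [norm_div, Complex.norm_exp]
      congr 2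
      simp [Complex.mul_re]
    rw [heq]
    have : Tendsto (fun y : ℝ => z.re * y) atBot atBot :=
      Filter.tendsto_id.const_mul_atBot hz
    simpa using (Real.tendsto_exp_atBot.comp this).div_const ‖z‖
  have := integral_Iic_of_hasDerivAt_of_tendsto' hderiv (aux_integrableOn_cexp_Iic hz c) htends
  simpa using this

lemma aux_integral_rexp_Iic {b : ℝ} (hb : 0 < b) (c : ℝ) :
    ∫ y in Set.Iic c, Real.exp (b * y) = Real.exp (b * c) / b := by
  have hderiv : ∀ x ∈ Set.Iic c,
      HasDerivAt (fun y : ℝ => Real.exp (b * y) / b) (Real.exp (b * x)) x := by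
    intro x _
    have h1 : HasDerivAt (fun y : ℝ => Real.exp (b * y)) (Real.exp (b * x) * b) x := by
      simpa [mul_comm, Function.comp_def] using
        (Real.hasDerivAt_exp (b * x)).comp x ((hasDerivAt_id x).const_mul b)
    simpa [mul_div_cancel_right₀ _ hb.ne'] using h1.div_const b
  have htends : Tendsto (fun y : ℝ => Real.exp (b * y) / b) atBot (nhds 0) := by
    have : Tendsto (fun y : ℝ => b * y) atBot atBot := Filter.tendsto_id.const_mul_atBot hb
    simpa using (Real.tendsto_exp_atBot.comp this).div_const b
  simpa using
    integral_Iic_of_hasDerivAt_of_tendsto' hderiv (aux_integrableOn_rexp_Iic hb c) htends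

lemma aux_fubini_key (μ : Measure ℝ) [IsProbabilityMeasure μ]
    {α₁ : ℝ} (hα₁ : 0 < α₁) (hμexp : Integrable (fun t => Real.exp (α₁ * t)) μ)
    (z : ℂ) (hzre : z.re = α₁) :
    Integrable (fun y : ℝ => Complex.exp (z * y) * ((μ (Set.Ioi y)).toReal : ℂ)) volume ∧
    ∫ y : ℝ, Complex.exp (z * y) * ((μ (Set.Ioi y)).toReal : ℂ)
      = (∫ t : ℝ, Complex.exp (z * t) ∂μ) / z := by
  have hz : 0 < z.re := hzre ▸ hα₁
  set f : ℝ × ℝ → ℂ :=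
    Set.indicator {p : ℝ × ℝ | p.1 < p.2} (fun p => Complex.exp (z * p.1)) with hf
  have hsect : ∀ t : ℝ, (fun y => f (y, t)) = Set.indicator (Set.Iio t)
      (fun y : ℝ => Complex.exp (z * y)) := by
    intro t; funext y
    by_cases h : y < t <;> simp [hf, Set.indicator_apply, Set.mem_Iio, h]
  have hsect2 : ∀ y : ℝ, (fun t => f (y, t)) = Set.indicator (Set.Ioi y)
      (fun _ : ℝ => Complex.exp (z * y)) := by
    intro y; funext t
    by_cases h : y < t <;> simp [hf, Set.indicator_apply, Set.mem_Ioi, h]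
  have hmeas : AEStronglyMeasurable f (volume.prod μ) := by
    refine (StronglyMeasurable.indicator ?_ ?_).aestronglyMeasurable
    · exact (Complex.continuous_exp.comp
        (continuous_const.mul (Complex.continuous_ofReal.comp continuous_fst))).stronglyMeasurable
    · exact measurableSet_lt measurable_fst measurable_snd
  have hnorm : ∀ t : ℝ, ∫ y : ℝ, ‖f (y, t)‖ = Real.exp (α₁ * t) / α₁ := by
    intro t
    have : (fun y : ℝ => ‖f (y, t)‖)
        = Set.indicator (Set.Iio t) (fun y : ℝ => Real.exp (α₁ * y)) := by
      funext y
      by_cases h : y < t <;>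
        simp [hf, Set.indicator_apply, Set.mem_Iio, h, Complex.norm_exp,
          Complex.mul_re, hzre]
    rw [this, integral_indicator measurableSet_Iio,
      ← integral_Iic_eq_integral_Iio, aux_integral_rexp_Iic hα₁ t]
  have hfint : Integrable f (volume.prod μ) := by
    rw [integrable_prod_iff' hmeas]
    constructor
    · filter_upwards with t
      rw [hsect t]
      exact ((aux_integrableOn_cexp_Iic hz t).mono_set
        Iio_subset_Iic_self).integrable_indicator measurableSet_Iio
    · refine (hμexp.div_const α₁).congr ?_
      filter_upwards with t
      rw [hnorm t]
  constructor
  · refine hfint.integral_prod_left.congr ?_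
    filter_upwards with y
    rw [hsect2 y, integral_indicator_const _ measurableSet_Ioi]
    simp [mul_comm, Measure.real]
  · have swap := integral_integral_swap (f := fun y t => f (y, t)) (by exact hfint)
    have lhs : ∫ y : ℝ, ∫ t : ℝ, f (y, t) ∂μ
        = ∫ y : ℝ, Complex.exp (z * y) * ((μ (Set.Ioi y)).toReal : ℂ) := by
      congr 1; funext y
      rw [hsect2 y, integral_indicator_const _ measurableSet_Ioi]
      simp [mul_comm, Measure.real]
    have rhs : ∫ t : ℝ, ∫ y : ℝ, f (y, t) ∂volume ∂μ
        = (∫ t : ℝ, Complex.exp (z * t) ∂μ) / z := by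
      rw [← integral_div]
      congr 1; funext t
      rw [hsect t, integral_indicator measurableSet_Iio,
        ← integral_Iic_eq_integral_Iio, aux_integral_cexp_Iic hz t]
    rw [← lhs, swap, rhs]

lemma aux_continuousAt_tail (μ : Measure ℝ) [IsProbabilityMeasure μ]
    (hac : μ ≪ volume) (c : ℝ) :
    ContinuousAt (fun y : ℝ => (μ (Set.Ioi y)).toReal) c := by
  have hrepr : ∀ y : ℝ, (μ (Set.Ioi y)).toReal
      = ∫ t : ℝ, Set.indicator (Set.Ioi y) (fun _ => (1 : ℝ)) t ∂μ := by
    intro y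
    rw [integral_indicator_const _ measurableSet_Ioi]
    simp [Measure.real]
  simp only [ContinuousAt]
  simp only [hrepr]
  refine tendsto_integral_filter_of_dominated_convergence (fun _ => (1 : ℝ)) ?_ ?_ ?_ ?_
  · filter_upwards with y
    exact (aestronglyMeasurable_indicator_iff measurableSet_Ioi).2 aestronglyMeasurable_const
  · filter_upwards with y
    filter_upwards with t
    by_cases h : t ∈ Set.Ioi y <;> simp [Set.indicator_apply, h]
  · exact integrable_const 1
  · have hne : ∀ᵐ t ∂μ, t ≠ c := by
      rw [ae_iff]
      have : {t : ℝ | ¬ t ≠ c} = {c} := by ext t; simp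
      rw [this]
      exact hac Real.volume_singleton
    filter_upwards [hne] with t ht
    rcases lt_or_gt_of_ne ht with h | h
    · -- t < c : indicator tends to 0, and value at c is 0
      have hval : Set.indicator (Set.Ioi c) (fun _ => (1:ℝ)) t = 0 := by
        simp [Set.indicator_apply, Set.mem_Ioi, not_lt.2 h.le]
      rw [hval]
      refine Tendsto.congr' ?_ tendsto_const_nhds
      filter_upwards [eventually_gt_nhds h] with y hy
      simp [Set.indicator_apply, Set.mem_Ioi, not_lt.2 hy.le]
    · have hval : Set.indicator (Set.Ioi c) (fun _ => (1:ℝ)) t = 1 := by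
        simp [Set.indicator_apply, Set.mem_Ioi, h]
      rw [hval]
      refine Tendsto.congr' ?_ tendsto_const_nhds
      filter_upwards [eventually_lt_nhds h] with y hy
      simp [Set.indicator_apply, Set.mem_Ioi, hy]

/-- Fourier representation of the tail probability `P(Y > y*)`. -/
theorem tail_probability_fourier_repr
    {Ω : Type*} [MeasureSpace Ω] [IsProbabilityMeasure (ℙ : Measure Ω)]
    (Y : Ω → ℝ) (hYmeas : Measurable Y) (hYnonneg : ∀ ω, 0 ≤ Y ω)
    (hdens : Measure.map Y ℙ ≪ (volume : Measure ℝ))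
    (ystar : ℝ) (hystar : 0 ≤ ystar) (α₁ : ℝ) (hα₁ : 0 < α₁)
    (hmgf : Integrable (fun ω => Real.exp (α₁ * Y ω)) ℙ)
    (Φ : ℂ → ℂ)
    (hΦ : ∀ z : ℂ, z.re ≤ α₁ → Φ z = ∫ ω, Complex.exp (z * (Y ω : ℂ)) ∂(ℙ : Measure Ω))
    (hint : Integrable (fun u : ℝ =>
      Φ ((α₁ : ℂ) - Complex.I * (u : ℂ)) / ((α₁ : ℂ) - Complex.I * (u : ℂ))) volume) :
    ((ℙ : Measure Ω) {ω | ystar < Y ω}).toReal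
      = (1 / Real.pi) * ∫ u in Set.Ioi (0 : ℝ),
          (Complex.exp (-((α₁ : ℂ) - Complex.I * (u : ℂ)) * (ystar : ℂ)) *
            Φ ((α₁ : ℂ) - Complex.I * (u : ℂ)) /
            ((α₁ : ℂ) - Complex.I * (u : ℂ))).re := by
  classical
  set μ : Measure ℝ := Measure.map Y ℙ with hμ
  haveI : IsProbabilityMeasure μ := Measure.isProbabilityMeasure_map hYmeas.aemeasurable
  have hμexp : Integrable (fun t : ℝ => Real.exp (α₁ * t)) μ := by
    rw [hμ, integrable_map_measure (Continuous.aestronglyMeasurable (by continuity)) hYmeas.aemeasurable]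
    exact hmgf
  have hzre : ∀ u : ℝ, ((α₁ : ℂ) - Complex.I * (u : ℂ)).re = α₁ := by
    intro u; simp
  have hΦμ : ∀ z : ℂ, z.re ≤ α₁ → Φ z = ∫ t : ℝ, Complex.exp (z * t) ∂μ := by
    intro z hz
    rw [hΦ z hz, hμ]
    exact (integral_map (f := fun t : ℝ => Complex.exp (z * (t:ℂ))) hYmeas.aemeasurable (Continuous.aestronglyMeasurable (by continuity))).symm
  -- the function whose Fourier transform we invert
  set Fc : ℝ → ℂ := fun y => ((Real.exp (α₁ * y) * (μ (Set.Ioi y)).toReal : ℝ) : ℂ) with hFcdef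
  have hFc : Integrable Fc := by
    refine ((aux_fubini_key μ hα₁ hμexp (α₁ : ℂ) (by simp)).1).congr ?_
    filter_upwards with y
    simp only [hFcdef]
    push_cast
    ring
  -- Fourier transform of Fc
  have h𝓕 : 𝓕 Fc = fun ξ : ℝ =>
      Φ ((α₁ : ℂ) - Complex.I * ((2 * π * ξ : ℝ) : ℂ)) /
        ((α₁ : ℂ) - Complex.I * ((2 * π * ξ : ℝ) : ℂ)) := by
    funext ξ
    set z : ℂ := (α₁ : ℂ) - Complex.I * ((2 * π * ξ : ℝ) : ℂ) with hzdef
    have key := (aux_fubini_key μ hα₁ hμexp z (hzre _)).2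
    rw [Real.fourier_real_eq_integral_exp_smul]
    have hi : ∀ v : ℝ, Complex.exp (((-2 : ℝ) * π * v * ξ : ℝ) * Complex.I) • Fc v
        = Complex.exp (z * v) * ((μ (Set.Ioi v)).toReal : ℂ) := by
      intro v
      simp only [hFcdef, smul_eq_mul, Complex.ofReal_mul, Complex.ofReal_exp]
      rw [← mul_assoc, ← Complex.exp_add]
      congr 2
      rw [hzdef]
      push_cast
      ring
    rw [integral_congr_ae (Eventually.of_forall hi), key, hΦμ z (le_of_eq (hzre _))]
  have h𝓕int : Integrable (𝓕 Fc) := by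
    rw [h𝓕]
    exact hint.comp_mul_left' (R := 2 * π) (by positivity)
  have hcont : ContinuousAt Fc ystar := by
    have h1 : ContinuousAt (fun y : ℝ => (μ (Set.Ioi y)).toReal) ystar :=
      aux_continuousAt_tail μ hdens ystar
    exact Complex.continuous_ofReal.continuousAt.comp
      (((Real.continuous_exp.comp (continuous_const.mul continuous_id)).continuousAt).mul h1)
  have hinv : 𝓕⁻ (𝓕 Fc) ystar = Fc ystar := hFc.fourierInv_fourier_eq h𝓕int hcont
  -- compute the inverse Fourier integral via substitution u = 2πv
  set H : ℝ → ℂ := fun u => Complex.exp ((u : ℂ) * (ystar : ℂ) * Complex.I) *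
      (Φ ((α₁ : ℂ) - Complex.I * (u : ℂ)) / ((α₁ : ℂ) - Complex.I * (u : ℂ))) with hHdef
  have hinv2 : Fc ystar = ((2 * π)⁻¹ : ℝ) • ∫ u : ℝ, H u := by
    rw [← hinv, Real.fourierInv_eq_fourier_neg,
      Real.fourier_real_eq_integral_exp_smul, h𝓕]
    have hi : ∀ v : ℝ, Complex.exp (((-2 : ℝ) * π * v * (-ystar) : ℝ) * Complex.I) •
        (Φ ((α₁ : ℂ) - Complex.I * ((2 * π * v : ℝ) : ℂ)) /
          ((α₁ : ℂ) - Complex.I * ((2 * π * v : ℝ) : ℂ)))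
        = H (2 * π * v) := by
      intro v
      rw [hHdef, smul_eq_mul]
      congr 2
      push_cast
      ring
    rw [integral_congr_ae (Eventually.of_forall hi), Measure.integral_comp_mul_left H (2 * π)]
    congr 1
    rw [abs_of_pos (by positivity)]
  -- integrability of H
  have hH : Integrable H := by
    refine hint.bdd_mul (c := 1) ?_ (Eventually.of_forall fun u => ?_)
    · exact (Complex.continuous_exp.comp
        ((Complex.continuous_ofReal.mul continuous_const).mul
          continuous_const)).aestronglyMeasurable
    · rw [Complex.norm_exp]
      simp [Complex.mul_re, Complex.mul_im]
  -- real parts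
  set r : ℝ → ℝ := fun u =>
    (Complex.exp (-((α₁ : ℂ) - Complex.I * (u : ℂ)) * (ystar : ℂ)) *
      Φ ((α₁ : ℂ) - Complex.I * (u : ℂ)) /
      ((α₁ : ℂ) - Complex.I * (u : ℂ))).re with hrdef
  have hre : ∫ u : ℝ, (H u).re = (∫ u : ℝ, H u).re := by
    simpa using integral_re hH
  have hfr : Real.exp (α₁ * ystar) * (μ (Set.Ioi ystar)).toReal
      = (2 * π)⁻¹ * ∫ u : ℝ, (H u).re := by
    have h1 : (Fc ystar).re = Real.exp (α₁ * ystar) * (μ (Set.Ioi ystar)).toReal := by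
      simp only [hFcdef, Complex.ofReal_re]
    rw [← h1, hinv2, Complex.real_smul, Complex.re_ofReal_mul, hre]
  have hrH : ∀ u : ℝ, Real.exp (-(α₁ * ystar)) * (H u).re = r u := by
    intro u
    rw [← Complex.re_ofReal_mul, hrdef]
    congr 1
    rw [mul_div_assoc, hHdef, Complex.ofReal_exp, ← mul_assoc, ← Complex.exp_add]
    congr 2
    push_cast
    ring
  have htail : (μ (Set.Ioi ystar)).toReal = (2 * π)⁻¹ * ∫ u : ℝ, r u := by
    have h2 : (μ (Set.Ioi ystar)).toReal
        = Real.exp (-(α₁ * ystar)) * (Real.exp (α₁ * ystar) * (μ (Set.Ioi ystar)).toReal) := by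
      rw [← mul_assoc, ← Real.exp_add]
      simp
    rw [h2, hfr, ← mul_assoc, mul_comm (Real.exp (-(α₁ * ystar))) ((2 * π)⁻¹), mul_assoc,
      ← integral_const_mul]
    congr 1
    exact integral_congr_ae (Eventually.of_forall fun u => hrH u)
  -- evenness
  have hconj : ∀ u : ℝ,
      Complex.exp (-((α₁ : ℂ) - Complex.I * ((-u : ℝ) : ℂ)) * (ystar : ℂ)) *
        Φ ((α₁ : ℂ) - Complex.I * ((-u : ℝ) : ℂ)) / ((α₁ : ℂ) - Complex.I * ((-u : ℝ) : ℂ))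
      = (starRingEnd ℂ) (Complex.exp (-((α₁ : ℂ) - Complex.I * (u : ℂ)) * (ystar : ℂ)) *
        Φ ((α₁ : ℂ) - Complex.I * (u : ℂ)) / ((α₁ : ℂ) - Complex.I * (u : ℂ))) := by
    intro u
    have hz : ((α₁ : ℂ) - Complex.I * ((-u : ℝ) : ℂ))
        = (starRingEnd ℂ) ((α₁ : ℂ) - Complex.I * (u : ℂ)) := by
      simp [Complex.ext_iff]
    have hΦc : Φ ((starRingEnd ℂ) ((α₁ : ℂ) - Complex.I * (u : ℂ)))
        = (starRingEnd ℂ) (Φ ((α₁ : ℂ) - Complex.I * (u : ℂ))) := by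
      rw [hΦμ _ (le_of_eq (by rw [Complex.conj_re, hzre u])),
        hΦμ _ (le_of_eq (hzre u)), ← integral_conj]
      congr 1
      funext t
      rw [← Complex.exp_conj, map_mul, Complex.conj_ofReal]
    rw [hz, map_div₀, map_mul, hΦc, ← Complex.exp_conj]
    congr 1
    rw [map_mul, map_neg, Complex.conj_ofReal]
  have hr_even : ∀ u : ℝ, r (-u) = r u := by
    intro u
    simp only [hrdef, Complex.ofReal_neg]
    rw [show ((α₁:ℂ) - Complex.I * (-(u:ℂ))) = ((α₁:ℂ) - Complex.I * ((-u : ℝ) : ℂ)) by push_cast; ring,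
      hconj u, Complex.conj_re]
  have habs : ∀ u : ℝ, r |u| = r u := by
    intro u
    rcases le_or_gt 0 u with h | h
    · rw [_root_.abs_of_nonneg h]
    · rw [_root_.abs_of_neg h, hr_even]
  have h2int : ∫ u : ℝ, r u = 2 * ∫ u in Set.Ioi (0 : ℝ), r u := by
    rw [← integral_comp_abs (f := r)]
    exact integral_congr_ae (Eventually.of_forall fun u => (habs u).symm)
  have hioi : μ (Set.Ioi ystar) = ℙ {ω | ystar < Y ω} := by
    rw [hμ, Measure.map_apply hYmeas measurableSet_Ioi]
    rfl
  rw [← hioi, htail, h2int, ← mul_assoc]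
  congr 1
  rw [mul_comm]
  field_simp
end

section
/- Let n ≥ 1, let m be a real n×n matrix, let σ and θ₀ be real symmetric n×n matrices, and define ς_t = ∫₀^t e^{(t−s)m} σ² e^{(t−s)m^⊤} ds for t ≥ 0. Suppose T > 0 is such that I_n − 2θ₀ς_t is invertible for every t ∈ [0, T]. Then the matrix-valued function a(t) := e^{t m^⊤} (I_n − 2θ₀ς_t)^{−1} θ₀ e^{t m} satisfies a(0) = θ₀ and, for every t ∈ [0, T], a is differentiable at t with a′(t) = a(t) m + m^⊤ a(t) + 2 a(t) σ² a(t). -/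
open Matrix MeasureTheory intervalIntegral

attribute [local instance] Matrix.linftyOpNormedAddCommGroup Matrix.linftyOpNormedSpace
  Matrix.linftyOpNormedRing Matrix.linftyOpNormedAlgebra

variable {n : ℕ}

noncomputable def entryCLM (n : ℕ) (i j : Fin n) : Matrix (Fin n) (Fin n) ℝ →L[ℝ] ℝ :=
  LinearMap.toContinuousLinearMap
    { toFun := fun M => M i j
      map_add' := fun _ _ => rfl
      map_smul' := fun _ _ => rfl }

lemma hasDerivAt_entry {f : ℝ → Matrix (Fin n) (Fin n) ℝ} {f' : Matrix (Fin n) (Fin n) ℝ} {t : ℝ}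
    (h : HasDerivAt f f' t) (i j : Fin n) :
    HasDerivAt (fun s => f s i j) (f' i j) t :=
  (entryCLM n i j).hasFDerivAt.comp_hasDerivAt t h

lemma hasDerivAt_matrix {f : ℝ → Matrix (Fin n) (Fin n) ℝ} {f' : Matrix (Fin n) (Fin n) ℝ} {t : ℝ}
    (h : ∀ i j, HasDerivAt (fun s => f s i j) (f' i j) t) :
    HasDerivAt f f' t := by
  have hsum : HasDerivAt
      (fun s => ∑ i : Fin n, ∑ j : Fin n, f s i j • Matrix.single i j (1 : ℝ))
      (∑ i : Fin n, ∑ j : Fin n, f' i j • Matrix.single i j (1 : ℝ)) t :=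
    HasDerivAt.fun_sum fun i _ => HasDerivAt.fun_sum fun j _ => (h i j).smul_const _
  have e1 : f = fun s => ∑ i : Fin n, ∑ j : Fin n, f s i j • Matrix.single i j (1 : ℝ) :=
    funext fun s => by
      conv_lhs => rw [Matrix.matrix_eq_sum_single (f s)]
      simp [Matrix.smul_single]
  have e2 : f' = ∑ i : Fin n, ∑ j : Fin n, f' i j • Matrix.single i j (1 : ℝ) := by
    conv_lhs => rw [Matrix.matrix_eq_sum_single f']
    simp [Matrix.smul_single]
  rw [e1, e2]; exact hsum

/-- the explicit function
`a(t) = e^{t mᵀ} (I − 2 θ₀ ς_t)⁻¹ θ₀ e^{t m}` solves the matrix Riccati ODE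
`a′ = a m + mᵀ a + 2 a σ² a` with `a(0) = θ₀` (derivatives taken entrywise). -/
theorem wishart_riccati_solution
    (n : ℕ) (hn : 1 ≤ n) (m σ θ₀ : Matrix (Fin n) (Fin n) ℝ)
    (hσ : σ.IsSymm) (hθ₀ : θ₀.IsSymm)
    (ς : ℝ → Matrix (Fin n) (Fin n) ℝ)
    (hς : ∀ t, ∀ i j, ς t i j =
      ∫ s in (0 : ℝ)..t,
        (NormedSpace.exp ((t - s) • m) * σ ^ 2 * NormedSpace.exp ((t - s) • mᵀ)) i j)
    (T : ℝ) (hT : 0 < T)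
    (hinv : ∀ t ∈ Set.Icc (0 : ℝ) T, IsUnit (1 - 2 • (θ₀ * ς t)))
    (a : ℝ → Matrix (Fin n) (Fin n) ℝ)
    (ha : ∀ t, a t =
      NormedSpace.exp (t • mᵀ) * (1 - 2 • (θ₀ * ς t))⁻¹ * θ₀ * NormedSpace.exp (t • m)) :
    a 0 = θ₀ ∧
      ∀ t ∈ Set.Icc (0 : ℝ) T, ∀ i j,
        HasDerivAt (fun s => a s i j)
          ((a t * m + mᵀ * a t + 2 • (a t * σ ^ 2 * a t)) i j) t := by
  classical
  set g : ℝ → Matrix (Fin n) (Fin n) ℝ :=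
    fun u => NormedSpace.exp (u • m) * σ ^ 2 * NormedSpace.exp (u • mᵀ) with hg_def
  -- continuity of g
  have hgc : Continuous g := by
    have h1 : Continuous fun u : ℝ => NormedSpace.exp (u • m) :=
      NormedSpace.exp_continuous.comp (continuous_id.smul continuous_const)
    have h2 : Continuous fun u : ℝ => NormedSpace.exp (u • mᵀ) :=
      NormedSpace.exp_continuous.comp (continuous_id.smul continuous_const)
    exact (h1.mul continuous_const).mul h2
  -- rewrite ς via change of variables
  have hςeq : ∀ t i j, ς t i j = ∫ u in (0 : ℝ)..t, g u i j := by
    intro t i j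
    rw [hς t i j]
    have := intervalIntegral.integral_comp_sub_left (a := (0:ℝ)) (b := t)
      (fun u => g u i j) t
    simpa [hg_def] using this
  -- derivative of ς
  have hςd : ∀ t, HasDerivAt ς (g t) t := by
    intro t
    apply hasDerivAt_matrix
    intro i j
    have hcont : Continuous fun u : ℝ => g u i j := (entryCLM n i j).continuous.comp hgc
    have hint := (hcont.integral_hasStrictDerivAt 0 t).hasDerivAt
    have heq : (fun s => ς s i j) = fun s => ∫ u in (0 : ℝ)..s, g u i j :=
      funext fun s => hςeq s i j
    rw [heq]
    exact hint
  -- derivative of U := 1 - 2 • (θ₀ * ς ·)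
  have hUd : ∀ t, HasDerivAt (fun s => 1 - 2 • (θ₀ * ς s)) (-(2 • (θ₀ * g t))) t := fun t =>
    (((hςd t).const_mul θ₀).const_smul 2).const_sub 1
  -- derivative of the inverse
  have hVd : ∀ t, IsUnit (1 - 2 • (θ₀ * ς t)) →
      HasDerivAt (fun s => (1 - 2 • (θ₀ * ς s))⁻¹)
        (2 • ((1 - 2 • (θ₀ * ς t))⁻¹ * (θ₀ * g t) * (1 - 2 • (θ₀ * ς t))⁻¹)) t := by
    intro t ht
    have hinv_eq : (fun s => (1 - 2 • (θ₀ * ς s))⁻¹)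
        = fun s => Ring.inverse (1 - 2 • (θ₀ * ς s)) :=
      funext fun s => Matrix.nonsing_inv_eq_ringInverse _
    rw [hinv_eq]
    have hfd := hasFDerivAt_ringInverse (𝕜 := ℝ) ht.unit
    rw [ht.unit_spec] at hfd
    have hcomp := hfd.comp_hasDerivAt t (hUd t)
    have hci : ((ht.unit⁻¹ : (Matrix (Fin n) (Fin n) ℝ)ˣ) : Matrix (Fin n) (Fin n) ℝ)
        = (1 - 2 • (θ₀ * ς t))⁻¹ := by
      rw [Matrix.coe_units_inv, ht.unit_spec]
    have hval2 : (-(ContinuousLinearMap.mulLeftRight ℝ (Matrix (Fin n) (Fin n) ℝ)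
          ↑ht.unit⁻¹ ↑ht.unit⁻¹)) (-(2 • (θ₀ * g t)))
        = 2 • ((1 - 2 • (θ₀ * ς t))⁻¹ * (θ₀ * g t) * (1 - 2 • (θ₀ * ς t))⁻¹) := by
      simp only [ContinuousLinearMap.neg_apply, ContinuousLinearMap.mulLeftRight_apply, hci,
        mul_neg, neg_mul, neg_neg, mul_smul_comm, smul_mul_assoc]
    rw [hval2] at hcomp
    exact hcomp
  -- derivatives of the exponentials
  have hPd : ∀ t, HasDerivAt (fun s : ℝ => NormedSpace.exp (s • mᵀ))
      (mᵀ * NormedSpace.exp (t • mᵀ)) t := fun t => hasDerivAt_exp_smul_const' mᵀ t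
  have hQd : ∀ t, HasDerivAt (fun s : ℝ => NormedSpace.exp (s • m))
      (NormedSpace.exp (t • m) * m) t := fun t => hasDerivAt_exp_smul_const m t
  constructor
  · -- a 0 = θ₀
    have hς0 : ς 0 = 0 := by
      ext i j
      rw [hς 0 i j, intervalIntegral.integral_same]
      rfl
    rw [ha 0, hς0]
    simp [NormedSpace.exp_zero]
  · intro t htT i j
    have hu := hinv t htT
    set P := NormedSpace.exp (t • mᵀ) with hP
    set Q := NormedSpace.exp (t • m) with hQ
    set W := (1 - 2 • (θ₀ * ς t))⁻¹ with hW
    have hd : HasDerivAt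
        (fun s => NormedSpace.exp (s • mᵀ) * (1 - 2 • (θ₀ * ς s))⁻¹ * θ₀
            * NormedSpace.exp (s • m))
        (((mᵀ * P) * W + P * (2 • (W * (θ₀ * g t) * W))) * θ₀ * Q + P * W * θ₀ * (Q * m)) t :=
      (((hPd t).mul (hVd t hu)).mul_const θ₀).mul (hQd t)
    have hA : HasDerivAt a
        (((mᵀ * P) * W + P * (2 • (W * (θ₀ * g t) * W))) * θ₀ * Q + P * W * θ₀ * (Q * m)) t :=
      hd.congr_of_eventuallyEq (Filter.Eventually.of_forall fun s => ha s)
    have hval : ((mᵀ * P) * W + P * (2 • (W * (θ₀ * g t) * W))) * θ₀ * Q + P * W * θ₀ * (Q * m)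
        = a t * m + mᵀ * a t + 2 • (a t * σ ^ 2 * a t) := by
      rw [ha t, ← hP, ← hQ, ← hW, hg_def]
      simp only [two_smul]
      noncomm_ring
    rw [hval] at hA
    exact hasDerivAt_entry hA i j
end

section
/- Let n ≥ 1, let m be a real n×n matrix and σ a real symmetric n×n matrix, and define ς_t = ∫₀^t e^{(t−s)m} σ² e^{(t−s)m^⊤} ds for t ≥ 0. Then ς₀ = 0, each ς_t is symmetric, the map t ↦ ς_t is differentiable with ς_t′ = σ² + m ς_t + ς_t m^⊤ for all t ≥ 0, and if moreover σ is invertible then ς_t is positive definite for every t > 0. -/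
open Matrix MeasureTheory intervalIntegral NormedSpace

theorem aux_exp_entry_hasDerivAt {n : ℕ} (m σ2 : Matrix (Fin n) (Fin n) ℝ) (t : ℝ) (i j : Fin n) :
    HasDerivAt (fun u : ℝ => (exp (u • m) * σ2 * exp (u • mᵀ)) i j)
      ((m * (exp (t • m) * σ2 * exp (t • mᵀ)) +
        (exp (t • m) * σ2 * exp (t • mᵀ)) * mᵀ) i j) t := by
  letI : SeminormedRing (Matrix (Fin n) (Fin n) ℝ) := Matrix.linftyOpSemiNormedRing
  letI : NormedRing (Matrix (Fin n) (Fin n) ℝ) := Matrix.linftyOpNormedRing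
  letI : NormedAlgebra ℝ (Matrix (Fin n) (Fin n) ℝ) := Matrix.linftyOpNormedAlgebra
  have h1 : HasDerivAt (fun u : ℝ => exp (u • m)) (m * exp (t • m)) t :=
    hasDerivAt_exp_smul_const' m t
  have h2 : HasDerivAt (fun u : ℝ => exp (u • mᵀ)) (exp (t • mᵀ) * mᵀ) t :=
    hasDerivAt_exp_smul_const mᵀ t
  have h3 := (h1.mul_const σ2).fun_mul h2
  let L := LinearMap.toContinuousLinearMap (Matrix.entryLinearMap ℝ ℝ i j)
  have h4 := (L.hasFDerivAt).comp_hasDerivAt t h3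
  convert h4 using 1
  show _ = L _
  simp only [L, LinearMap.coe_toContinuousLinearMap', Matrix.entryLinearMap,
    LinearMap.coe_mk, AddHom.coe_mk, Matrix.add_apply]
  simp only [Matrix.mul_assoc]
  all_goals rfl

theorem aux_entry_cont {n : ℕ} (m σ2 : Matrix (Fin n) (Fin n) ℝ) (i j : Fin n) :
    Continuous (fun u : ℝ => (exp (u • m) * σ2 * exp (u • mᵀ)) i j) :=
  continuous_iff_continuousAt.2 fun t => (aux_exp_entry_hasDerivAt m σ2 t i j).continuousAt

theorem aux_deriv_cont {n : ℕ} (m σ2 : Matrix (Fin n) (Fin n) ℝ) (i j : Fin n) :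
    Continuous (fun u : ℝ =>
      (m * (exp (u • m) * σ2 * exp (u • mᵀ)) +
        (exp (u • m) * σ2 * exp (u • mᵀ)) * mᵀ) i j) := by
  simp only [Matrix.add_apply, Matrix.mul_apply]
  exact ((continuous_finset_sum _ fun k _ => continuous_const.mul (aux_entry_cont m σ2 k j)).add
    (continuous_finset_sum _ fun k _ => (aux_entry_cont m σ2 i k).mul continuous_const))

theorem aux_eq {n : ℕ} (m σ2 : Matrix (Fin n) (Fin n) ℝ) (t : ℝ) (i j : Fin n) :
    (exp (t • m) * σ2 * exp (t • mᵀ)) i j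
      = σ2 i j + ∫ u in (0:ℝ)..t,
          (m * (exp (u • m) * σ2 * exp (u • mᵀ)) +
            (exp (u • m) * σ2 * exp (u • mᵀ)) * mᵀ) i j := by
  have h := intervalIntegral.integral_eq_sub_of_hasDerivAt
    (f := fun u : ℝ => (exp (u • m) * σ2 * exp (u • mᵀ)) i j)
    (f' := fun u : ℝ => (m * (exp (u • m) * σ2 * exp (u • mᵀ)) +
      (exp (u • m) * σ2 * exp (u • mᵀ)) * mᵀ) i j)
    (a := 0) (b := t)
    (fun u _ => aux_exp_entry_hasDerivAt m σ2 u i j)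
    ((aux_deriv_cont m σ2 i j).intervalIntegrable 0 t)
  have h0 : (exp ((0:ℝ) • m) * σ2 * exp ((0:ℝ) • mᵀ)) i j = σ2 i j := by
    simp [zero_smul, exp_zero]
  simp only [h0] at h
  linarith

/-- the matrix function `ς_t = ∫₀^t e^{(t−s)m} σ² e^{(t−s)mᵀ} ds` (entrywise
integral) satisfies `ς₀ = 0`, is symmetric, solves `ς′ = σ² + m ς + ς mᵀ` entrywise, and is
positive definite for `t > 0` when `σ` is invertible. -/
theorem wishart_sigma_properties
    (n : ℕ) (hn : 1 ≤ n) (m σ : Matrix (Fin n) (Fin n) ℝ) (hσ : σ.IsSymm)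
    (ς : ℝ → Matrix (Fin n) (Fin n) ℝ)
    (hς : ∀ t, ∀ i j, ς t i j =
      ∫ s in (0 : ℝ)..t,
        (NormedSpace.exp ((t - s) • m) * σ ^ 2 * NormedSpace.exp ((t - s) • mᵀ)) i j) :
    ς 0 = 0 ∧
      (∀ t, (ς t).IsSymm) ∧
      (∀ t : ℝ, 0 ≤ t → ∀ i j,
        HasDerivAt (fun s => ς s i j) ((σ ^ 2 + m * ς t + ς t * mᵀ) i j) t) ∧
      (IsUnit σ → ∀ t : ℝ, 0 < t → (ς t).PosDef) := by
  -- change of variables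
  have hς2 : ∀ t, ∀ i j, ς t i j =
      ∫ u in (0:ℝ)..t, (exp (u • m) * σ ^ 2 * exp (u • mᵀ)) i j := by
    intro t i j
    rw [hς t i j]
    have := intervalIntegral.integral_comp_sub_left
      (f := fun u : ℝ => (exp (u • m) * σ ^ 2 * exp (u • mᵀ)) i j) (a := 0) (b := t) t
    simpa using this
  -- symmetry of the integrand
  have hsymmF : ∀ u : ℝ, (exp (u • m) * σ ^ 2 * exp (u • mᵀ))ᵀ
      = exp (u • m) * σ ^ 2 * exp (u • mᵀ) := by
    intro u
    have he : exp (u • mᵀ) = (exp (u • m))ᵀ := by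
      rw [← Matrix.transpose_smul, Matrix.exp_transpose]
    rw [he, Matrix.transpose_mul, Matrix.transpose_mul, Matrix.transpose_transpose,
      Matrix.transpose_pow, hσ.eq, Matrix.mul_assoc]
  have hzero : ς 0 = 0 := by
    ext i j
    simp [hς2 0 i j]
  have hsymm : ∀ t, (ς t).IsSymm := by
    intro t
    show (ς t)ᵀ = ς t
    ext i j
    show ς t j i = ς t i j
    rw [hς2 t j i, hς2 t i j]
    refine intervalIntegral.integral_congr fun u _ => ?_
    have h2 := congrFun (congrFun (hsymmF u) i) j
    exact h2
  -- the matrix-level quantities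
  have hcA : ∀ i j : Fin n, Continuous fun u : ℝ =>
      (m * (exp (u • m) * σ ^ 2 * exp (u • mᵀ))) i j := by
    intro i j
    simpa only [Matrix.mul_apply] using
      (continuous_finset_sum _ fun k _ => continuous_const.fun_mul (aux_entry_cont m (σ ^ 2) k j))
  have hcB : ∀ i j : Fin n, Continuous fun u : ℝ =>
      ((exp (u • m) * σ ^ 2 * exp (u • mᵀ)) * mᵀ) i j := by
    intro i j
    simpa only [Matrix.mul_apply] using
      (continuous_finset_sum _ fun k _ => (aux_entry_cont m (σ ^ 2) i k).fun_mul continuous_const)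
  have hmul : ∀ t : ℝ, ∀ i j, (m * ς t) i j
      = ∫ u in (0:ℝ)..t, (m * (exp (u • m) * σ ^ 2 * exp (u • mᵀ))) i j := by
    intro t i j
    rw [Matrix.mul_apply]
    have h1 : ∀ k : Fin n, m i k * ς t k j
        = ∫ u in (0:ℝ)..t, m i k * (exp (u • m) * σ ^ 2 * exp (u • mᵀ)) k j := by
      intro k; rw [hς2 t k j, ← intervalIntegral.integral_const_mul]
    rw [Finset.sum_congr rfl fun k _ => h1 k,
      ← intervalIntegral.integral_finset_sum (fun k _ =>
        ((continuous_const.fun_mul (aux_entry_cont m (σ ^ 2) k j)).intervalIntegrable 0 t))]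
    exact intervalIntegral.integral_congr fun u _ => (Matrix.mul_apply).symm
  have hmulr : ∀ t : ℝ, ∀ i j, (ς t * mᵀ) i j
      = ∫ u in (0:ℝ)..t, ((exp (u • m) * σ ^ 2 * exp (u • mᵀ)) * mᵀ) i j := by
    intro t i j
    rw [Matrix.mul_apply]
    have h1 : ∀ k : Fin n, ς t i k * mᵀ k j
        = ∫ u in (0:ℝ)..t, (exp (u • m) * σ ^ 2 * exp (u • mᵀ)) i k * mᵀ k j := by
      intro k; rw [hς2 t i k, ← intervalIntegral.integral_mul_const]
    rw [Finset.sum_congr rfl fun k _ => h1 k,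
      ← intervalIntegral.integral_finset_sum (fun k _ =>
        (((aux_entry_cont m (σ ^ 2) i k).fun_mul continuous_const).intervalIntegrable 0 t))]
    exact intervalIntegral.integral_congr fun u _ => (Matrix.mul_apply).symm
  have hkey : ∀ t : ℝ, ∀ i j, (σ ^ 2 + m * ς t + ς t * mᵀ) i j
      = (exp (t • m) * σ ^ 2 * exp (t • mᵀ)) i j := by
    intro t i j
    rw [aux_eq m (σ ^ 2) t i j]
    simp only [Matrix.add_apply]
    rw [hmul t i j, hmulr t i j, add_assoc,
      ← intervalIntegral.integral_add ((hcA i j).intervalIntegrable 0 t)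
        ((hcB i j).intervalIntegrable 0 t)]
  have hderiv : ∀ t : ℝ, 0 ≤ t → ∀ i j,
      HasDerivAt (fun s => ς s i j) ((σ ^ 2 + m * ς t + ς t * mᵀ) i j) t := by
    intro t _ i j
    have hfun : (fun s => ς s i j)
        = fun s => ∫ u in (0:ℝ)..s, (exp (u • m) * σ ^ 2 * exp (u • mᵀ)) i j :=
      funext fun s => hς2 s i j
    rw [hfun, hkey t i j]
    exact intervalIntegral.integral_hasDerivAt_right
      ((aux_entry_cont m (σ ^ 2) i j).intervalIntegrable 0 t)
      ((aux_entry_cont m (σ ^ 2) i j).stronglyMeasurableAtFilter _ _)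
      (aux_entry_cont m (σ ^ 2) i j).continuousAt
  refine ⟨hzero, hsymm, hderiv, ?_⟩
  intro hu t ht
  refine Matrix.posDef_iff_dotProduct_mulVec.2 ⟨?_, fun x hx => ?_⟩
  · rw [Matrix.IsHermitian, Matrix.conjTranspose_eq_transpose_of_trivial]
    exact hsymm t
  · have hcv : ∀ i : Fin n, Continuous fun u : ℝ =>
        ((exp (u • m) * σ ^ 2 * exp (u • mᵀ)) *ᵥ x) i := by
      intro i
      simpa only [Matrix.mulVec, dotProduct] using
        continuous_finset_sum _ fun j _ => (aux_entry_cont m (σ ^ 2) i j).fun_mul continuous_const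
    have hquadv : ∀ i : Fin n, (ς t *ᵥ x) i
        = ∫ u in (0:ℝ)..t, ((exp (u • m) * σ ^ 2 * exp (u • mᵀ)) *ᵥ x) i := by
      intro i
      show ∑ j, ς t i j * x j = _
      have h1 : ∀ j : Fin n, ς t i j * x j
          = ∫ u in (0:ℝ)..t, (exp (u • m) * σ ^ 2 * exp (u • mᵀ)) i j * x j := by
        intro j; rw [hς2 t i j, ← intervalIntegral.integral_mul_const]
      rw [Finset.sum_congr rfl fun j _ => h1 j,
        ← intervalIntegral.integral_finset_sum (fun j _ =>
          (((aux_entry_cont m (σ ^ 2) i j).fun_mul continuous_const).intervalIntegrable 0 t))]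
      exact intervalIntegral.integral_congr fun u _ => rfl
    have hquad : star x ⬝ᵥ (ς t *ᵥ x)
        = ∫ u in (0:ℝ)..t, star x ⬝ᵥ ((exp (u • m) * σ ^ 2 * exp (u • mᵀ)) *ᵥ x) := by
      show ∑ i, star x i * (ς t *ᵥ x) i = _
      have h1 : ∀ i : Fin n, star x i * (ς t *ᵥ x) i
          = ∫ u in (0:ℝ)..t, star x i * ((exp (u • m) * σ ^ 2 * exp (u • mᵀ)) *ᵥ x) i := by
        intro i; rw [hquadv i, ← intervalIntegral.integral_const_mul]
      rw [Finset.sum_congr rfl fun i _ => h1 i,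
        ← intervalIntegral.integral_finset_sum (fun i _ =>
          ((continuous_const.fun_mul (hcv i)).intervalIntegrable 0 t))]
      exact intervalIntegral.integral_congr fun u _ => rfl
    rw [hquad]
    have hposint : ∀ u : ℝ,
        0 < star x ⬝ᵥ ((exp (u • m) * σ ^ 2 * exp (u • mᵀ)) *ᵥ x) := by
      intro u
      have he : (exp (u • mᵀ))ᵀ = exp (u • m) := by
        rw [← Matrix.transpose_smul, Matrix.exp_transpose, Matrix.transpose_transpose]
      have hC : exp (u • m) * σ ^ 2 * exp (u • mᵀ)
          = (σ * exp (u • mᵀ))ᵀ * (σ * exp (u • mᵀ)) := by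
        rw [Matrix.transpose_mul, he, hσ.eq, sq]
        simp only [Matrix.mul_assoc]
      rw [hC, ← Matrix.mulVec_mulVec, Matrix.dotProduct_mulVec, Matrix.vecMul_transpose]
      have hC0 : (σ * exp (u • mᵀ)) *ᵥ x ≠ 0 := by
        have hunit : IsUnit (σ * exp (u • mᵀ)) := hu.mul (Matrix.isUnit_exp _)
        intro h0
        exact hx (Matrix.mulVec_injective_iff_isUnit.2 hunit
          (by simp [h0, Matrix.mulVec_zero]))
      simpa [star_trivial] using
        (Matrix.dotProduct_star_self_pos_iff (v := (σ * exp (u • mᵀ)) *ᵥ x)).2 hC0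
    have hcg : Continuous fun u : ℝ =>
        star x ⬝ᵥ ((exp (u • m) * σ ^ 2 * exp (u • mᵀ)) *ᵥ x) := by
      simpa only [dotProduct] using
        continuous_finset_sum _ fun i _ => continuous_const.fun_mul (hcv i)
    exact intervalIntegral_pos_of_pos_on (hcg.intervalIntegrable 0 t)
      (fun u _ => hposint u) ht
end

section
/- Let n ≥ 1, let m be a real n×n matrix, let σ and θ₀ be real symmetric n×n matrices, β ∈ ℝ, and define ς_t = ∫₀^t e^{(t−s)m} σ² e^{(t−s)m^⊤} ds. Suppose T > 0 is such that det(I_n − 2ς_tθ₀) > 0 for every t ∈ [0, T], and let a(t) = e^{t m^⊤} (I_n − 2θ₀ς_t)^{−1} θ₀ e^{t m}. Then the function b(t) := −(β/2) · log det(I_n − 2ς_tθ₀) satisfies b(0) = 0 and, for every t ∈ [0, T], b is differentiable at t with b′(t) = β · tr(σ² a(t)). -/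
open Matrix MeasureTheory intervalIntegral


noncomputable def detCMM (n : ℕ) : ContinuousMultilinearMap ℝ (fun _ : Fin n => (Fin n → ℝ)) ℝ :=
  MultilinearMap.mkContinuous
    (Matrix.detRowAlternating : (Fin n → ℝ) [⋀^Fin n]→ₗ[ℝ] ℝ).toMultilinearMap
    (n.factorial : ℝ) (by
      intro M
      have hdet : (Matrix.detRowAlternating : (Fin n → ℝ) [⋀^Fin n]→ₗ[ℝ] ℝ).toMultilinearMap M
          = (Matrix.of M).det := rfl
      rw [hdet, Matrix.det_apply]
      refine (norm_sum_le _ _).trans ?_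
      have key : ∀ σ : Equiv.Perm (Fin n),
          ‖Equiv.Perm.sign σ • ∏ i, Matrix.of M (σ i) i‖ ≤ ∏ i : Fin n, ‖M i‖ := by
        intro σ
        have h1 : ‖Equiv.Perm.sign σ • ∏ i, Matrix.of M (σ i) i‖ = ‖∏ i, M (σ i) i‖ := by
          rcases Int.units_eq_one_or (Equiv.Perm.sign σ) with h | h <;>
            simp [h, Matrix.of_apply, norm_neg]
        rw [h1, Real.norm_eq_abs, Finset.abs_prod]
        calc (∏ i, |M (σ i) i|) ≤ ∏ i : Fin n, ‖M (σ i)‖ := by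
              refine Finset.prod_le_prod (fun _ _ => abs_nonneg _) (fun i _ => ?_)
              exact norm_le_pi_norm (M (σ i)) i
          _ = ∏ i : Fin n, ‖M i‖ := Equiv.prod_comp σ (fun i => ‖M i‖)
      refine (Finset.sum_le_sum fun σ _ => key σ).trans ?_
      simp [Finset.sum_const, Finset.card_univ, Fintype.card_perm, nsmul_eq_mul])

lemma sum_det_updateRow {n : ℕ} (A B : Matrix (Fin n) (Fin n) ℝ) :
    ∑ i, (A.updateRow i (B i)).det = (A.adjugate * B).trace := by
  have h : ∀ i, (A.updateRow i (B i)).det = Matrix.cramer Aᵀ (B i) i := fun i =>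
    (Matrix.cramer_transpose_apply A (B i) i).symm
  simp_rw [h, Matrix.cramer_eq_adjugate_mulVec, ← Matrix.adjugate_transpose]
  simp only [Matrix.mulVec, dotProduct, Matrix.trace, Matrix.diag_apply,
    Matrix.mul_apply, Matrix.transpose_apply]
  rw [Finset.sum_comm]

lemma hasDerivAt_det' {n : ℕ} (A : ℝ → Matrix (Fin n) (Fin n) ℝ)
    (A' : Matrix (Fin n) (Fin n) ℝ) (t : ℝ)
    (h : ∀ i j, HasDerivAt (fun s => A s i j) (A' i j) t) :
    HasDerivAt (fun s => (A s).det) ((A t).adjugate * A').trace t := by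
  set g : ℝ → (Fin n → Fin n → ℝ) := fun s i j => A s i j with hgdef
  set B' : Fin n → Fin n → ℝ := fun i j => A' i j with hB'def
  have hg : HasDerivAt g B' t :=
    hasDerivAt_pi.mpr fun i => hasDerivAt_pi.mpr fun j => h i j
  have hcomp := ((detCMM n).hasFDerivAt (x := g t)).comp_hasDerivAt t hg
  have heq : (detCMM n).linearDeriv (g t) B' = ((A t).adjugate * A').trace := by
    rw [ContinuousMultilinearMap.linearDeriv_apply, ← sum_det_updateRow]
    rfl
  rw [heq] at hcomp
  exact hcomp

/-- in the Bru specification `ω = β σ²`, the function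
`b(t) = −(β/2) log det(I − 2 ς_t θ₀)` satisfies `b(0) = 0` and `b′(t) = β tr(σ² a(t))`,
where `a(t) = e^{t mᵀ} (I − 2 θ₀ ς_t)⁻¹ θ₀ e^{t m}`. -/
theorem wishart_b_solution
    (n : ℕ) (hn : 1 ≤ n) (m σ θ₀ : Matrix (Fin n) (Fin n) ℝ)
    (hσ : σ.IsSymm) (hθ₀ : θ₀.IsSymm) (β : ℝ)
    (ς : ℝ → Matrix (Fin n) (Fin n) ℝ)
    (hς : ∀ t, ∀ i j, ς t i j =
      ∫ s in (0 : ℝ)..t,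
        (NormedSpace.exp ((t - s) • m) * σ ^ 2 * NormedSpace.exp ((t - s) • mᵀ)) i j)
    (T : ℝ) (hT : 0 < T)
    (hdet : ∀ t ∈ Set.Icc (0 : ℝ) T, 0 < (1 - 2 • (ς t * θ₀)).det)
    (a : ℝ → Matrix (Fin n) (Fin n) ℝ)
    (ha : ∀ t, a t =
      NormedSpace.exp (t • mᵀ) * (1 - 2 • (θ₀ * ς t))⁻¹ * θ₀ * NormedSpace.exp (t • m))
    (b : ℝ → ℝ)
    (hb : ∀ t, b t = -(β / 2) * Real.log (1 - 2 • (ς t * θ₀)).det) :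
    b 0 = 0 ∧
      ∀ t ∈ Set.Icc (0 : ℝ) T, HasDerivAt b (β * (σ ^ 2 * a t).trace) t := by
  -- the "time-homogeneous" integrand
  set E : ℝ → Matrix (Fin n) (Fin n) ℝ :=
    fun u => NormedSpace.exp (u • m) * σ ^ 2 * NormedSpace.exp (u • mᵀ) with hE
  -- rewrite ς via substitution
  have hςeq : ∀ t i j, ς t i j = ∫ s in (0:ℝ)..t, E s i j := by
    intro t i j
    rw [hς t i j]
    have h := intervalIntegral.integral_comp_sub_left (a := (0:ℝ)) (b := t)
      (fun s => E s i j) t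
    simpa [sub_self, sub_zero] using h
  -- continuity of entries of E
  have hEcont : Continuous E := by
    letI : NormedRing (Matrix (Fin n) (Fin n) ℝ) := Matrix.linftyOpNormedRing
    letI : NormedAlgebra ℝ (Matrix (Fin n) (Fin n) ℝ) := Matrix.linftyOpNormedAlgebra
    letI : CompleteSpace (Matrix (Fin n) (Fin n) ℝ) :=
      FiniteDimensional.complete ℝ _
    letI : NormedAlgebra ℚ (Matrix (Fin n) (Fin n) ℝ) := NormedAlgebra.restrictScalars ℚ ℝ _
    have h1 : Continuous fun u : ℝ => NormedSpace.exp (u • m) :=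
      NormedSpace.exp_continuous.comp (continuous_id.smul continuous_const)
    have h2 : Continuous fun u : ℝ => NormedSpace.exp (u • mᵀ) :=
      NormedSpace.exp_continuous.comp (continuous_id.smul continuous_const)
    exact (h1.matrix_mul continuous_const).matrix_mul h2
  -- ς entries are differentiable
  have hςd : ∀ (t : ℝ) (i j : Fin n), HasDerivAt (fun u => ς u i j) (E t i j) t := by
    intro t i j
    have hfun : (fun u => ς u i j) = fun u => ∫ s in (0:ℝ)..u, E s i j := by
      funext u; exact hςeq u i j
    rw [hfun]
    exact ((hEcont.matrix_elem i j).integral_hasStrictDerivAt 0 t).hasDerivAt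
  constructor
  · have hς0 : ς 0 = 0 := by
      ext i j
      rw [hςeq 0 i j, intervalIntegral.integral_same]; rfl
    rw [hb 0, hς0]
    simp
  · intro t ht
    -- entrywise derivative of the matrix inside the determinant
    have hA : ∀ i j, HasDerivAt (fun u => ((1 - 2 • (ς u * θ₀) : Matrix (Fin n) (Fin n) ℝ)) i j)
        ((-(2 • (E t * θ₀)) : Matrix (Fin n) (Fin n) ℝ) i j) t := by
      intro i j
      have hsum : HasDerivAt (fun u => ∑ k, ς u i k * θ₀ k j)
          (∑ k, E t i k * θ₀ k j) t :=
        HasDerivAt.fun_sum fun k _ => (hςd t i k).mul_const _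
      have hder := (hsum.const_smul (2 : ℕ)).const_sub
        ((1 : Matrix (Fin n) (Fin n) ℝ) i j)
      have hf : (fun u => ((1 - 2 • (ς u * θ₀) : Matrix (Fin n) (Fin n) ℝ)) i j)
          = fun u => (1 : Matrix (Fin n) (Fin n) ℝ) i j - 2 • ∑ k, ς u i k * θ₀ k j := by
        funext u
        rw [Matrix.sub_apply, Matrix.smul_apply, Matrix.mul_apply]
      have hval : ((-(2 • (E t * θ₀)) : Matrix (Fin n) (Fin n) ℝ)) i j
          = -(2 • ∑ k, E t i k * θ₀ k j) := by
        rw [Matrix.neg_apply, Matrix.smul_apply, Matrix.mul_apply]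
      rw [hf, hval]
      exact hder
    set D : Matrix (Fin n) (Fin n) ℝ := 1 - 2 • (ς t * θ₀) with hD
    set G : Matrix (Fin n) (Fin n) ℝ := 1 - 2 • (θ₀ * ς t) with hG
    have hdetd := hasDerivAt_det' (fun u => 1 - 2 • (ς u * θ₀)) (-(2 • (E t * θ₀))) t hA
    have dpos : 0 < D.det := hdet t ht
    have dne : D.det ≠ 0 := ne_of_gt dpos
    have hlog := hdetd.log dne
    have hbd := hlog.const_mul (-(β / 2))
    have hbf : b = fun u => -(β / 2) * Real.log ((1 - 2 • (ς u * θ₀)).det) := funext hb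
    rw [hbf]
    -- now identify the derivative value
    refine hbd.congr_deriv (Eq.symm ?_)
    -- algebra
    have h2 : ∀ X : Matrix (Fin n) (Fin n) ℝ, (2 : ℕ) • X = (2 : ℝ) • X := fun X =>
      (Nat.cast_smul_eq_nsmul ℝ 2 X).symm
    have hGD : G.det = D.det := by
      rw [hD, hG, h2, h2, ← smul_mul_assoc, Matrix.det_one_sub_mul_comm, mul_smul_comm]
    have hGunit : IsUnit G.det := by rw [hGD]; exact dne.isUnit
    have hcomm : θ₀ * D = G * θ₀ := by
      rw [hD, hG, h2, h2]
      simp [mul_sub, sub_mul, mul_smul_comm, smul_mul_assoc, mul_assoc]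
    have h1 : D * D⁻¹ = 1 := Matrix.mul_nonsing_inv _ dne.isUnit
    have h2' : G⁻¹ * G = 1 := Matrix.nonsing_inv_mul _ hGunit
    have hswap : G⁻¹ * θ₀ = θ₀ * D⁻¹ := by
      calc G⁻¹ * θ₀ = G⁻¹ * (θ₀ * (D * D⁻¹)) := by rw [h1, mul_one]
        _ = G⁻¹ * G * (θ₀ * D⁻¹) := by
              rw [← mul_assoc θ₀ D D⁻¹, hcomm]
              simp only [mul_assoc]
        _ = θ₀ * D⁻¹ := by rw [h2', one_mul]
    have hadj : D.adjugate = D.det • D⁻¹ := by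
      rw [Matrix.inv_def, smul_smul, Ring.inverse_eq_inv', mul_inv_cancel₀ dne, one_smul]
    -- compute trace value
    have htr : (D.adjugate * -(2 • (E t * θ₀))).trace
        = D.det * (-(2 * (D⁻¹ * (E t * θ₀)).trace)) := by
      rw [hadj, h2, mul_neg, Matrix.trace_neg, smul_mul_assoc, Matrix.trace_smul,
        Matrix.mul_smul, Matrix.trace_smul]
      simp only [smul_eq_mul]; ring
    have htr2 : (σ ^ 2 * a t).trace = (D⁻¹ * (E t * θ₀)).trace := by
      rw [ha t]
      have hX : NormedSpace.exp (t • mᵀ) * (1 - 2 • (θ₀ * ς t))⁻¹ * θ₀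
          = NormedSpace.exp (t • mᵀ) * θ₀ * D⁻¹ := by
        rw [mul_assoc]
        rw [show ((1 - 2 • (θ₀ * ς t))⁻¹ * θ₀ : Matrix (Fin n) (Fin n) ℝ) = G⁻¹ * θ₀ from rfl]
        rw [hswap, ← mul_assoc]
      rw [hX]
      rw [show σ ^ 2 * (NormedSpace.exp (t • mᵀ) * θ₀ * D⁻¹ * NormedSpace.exp (t • m))
          = (σ ^ 2 * NormedSpace.exp (t • mᵀ) * θ₀ * D⁻¹) * NormedSpace.exp (t • m) by
        simp only [mul_assoc]]
      rw [Matrix.trace_mul_comm]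
      rw [show NormedSpace.exp (t • m) * (σ ^ 2 * NormedSpace.exp (t • mᵀ) * θ₀ * D⁻¹)
          = (NormedSpace.exp (t • m) * σ ^ 2 * NormedSpace.exp (t • mᵀ) * θ₀) * D⁻¹ by
        simp only [mul_assoc]]
      rw [Matrix.trace_mul_comm]
    show β * (σ ^ 2 * a t).trace
        = -(β / 2) * ((D.adjugate * -(2 • (E t * θ₀))).trace / D.det)
    rw [htr, htr2, mul_comm (D.det), mul_div_assoc, div_self dne, mul_one]
    ring
end

section
/- Let n ≥ 1, let m be a real n×n matrix all of whose complex eigenvalues have strictly negative real part, and let σ be a real symmetric n×n matrix. Then the integral ς_∞ := ∫₀^∞ e^{s m} σ² e^{s m^⊤} ds converges (entrywise absolutely), ς_∞ satisfies the Lyapunov equation m ς_∞ + ς_∞ m^⊤ + σ² = 0, and for every β ∈ ℝ the matrix x̄ = β ς_∞ is the unique real n×n matrix solving m x̄ + x̄ m^⊤ = −β σ². -/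
open Matrix MeasureTheory

open NormedSpace Filter

attribute [local instance] Matrix.linftyOpSemiNormedRing Matrix.linftyOpNormedRing
  Matrix.linftyOpNormedAlgebra

variable {n : ℕ}

noncomputable def mulVecCLM (v : Fin n → ℂ) :
    Matrix (Fin n) (Fin n) ℂ →L[ℂ] (Fin n → ℂ) :=
  LinearMap.toContinuousLinearMap
    { toFun := fun M => M *ᵥ v
      map_add' := fun M N => Matrix.add_mulVec M N v
      map_smul' := fun c M => Matrix.smul_mulVec c M v }

lemma exp_mulVec_eq (M : Matrix (Fin n) (Fin n) ℂ) (v : Fin n → ℂ) :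
    exp M *ᵥ v = ∑' k : ℕ, ((k.factorial : ℂ)⁻¹ • (M ^ k *ᵥ v)) := by
  have h := (mulVecCLM v).map_tsum (expSeries_summable' (𝕂 := ℂ) M)
  simpa [mulVecCLM, LinearMap.toContinuousLinearMap, exp_eq_tsum ℂ] using h

-- expansion for a generalized eigenvector
lemma exp_mulVec_of_nilpotent_on {N : Matrix (Fin n) (Fin n) ℂ} {w : Fin n → ℂ} {K : ℕ}
    (hw : N ^ K *ᵥ w = 0) (c : ℂ) :
    exp (c • N) *ᵥ w = ∑ k ∈ Finset.range K, (c ^ k * (k.factorial : ℂ)⁻¹) • (N ^ k *ᵥ w) := by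
  rw [exp_mulVec_eq]
  rw [tsum_eq_sum (s := Finset.range K)]
  · refine Finset.sum_congr rfl fun k hk => ?_
    rw [smul_pow, Matrix.smul_mulVec, smul_smul, mul_comm]
  · intro k hk
    rw [Finset.mem_range, not_lt] at hk
    have : N ^ k *ᵥ w = 0 := by
      have : N ^ k = N ^ (k - K) * N ^ K := by rw [← pow_add]; congr 1; omega
      rw [this, ← Matrix.mulVec_mulVec, hw, Matrix.mulVec_zero]
    rw [smul_pow, Matrix.smul_mulVec, this, smul_zero, smul_zero]

lemma exp_smul_split (A : Matrix (Fin n) (Fin n) ℂ) (μ : ℂ) (c : ℂ) :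
    exp (c • A) = Complex.exp (c * μ) • exp (c • (A - μ • 1)) := by
  have h1 : c • A = c • (A - μ • 1) + (c * μ) • (1 : Matrix (Fin n) (Fin n) ℂ) := by
    rw [smul_sub, smul_smul]; abel
  have hcomm : Commute (c • (A - μ • 1)) ((c * μ) • (1 : Matrix (Fin n) (Fin n) ℂ)) :=
    ((Commute.one_right _).smul_right _).smul_left _
  erw [h1, exp_add_of_commute hcomm]
  have h2 : exp ((c * μ) • (1 : Matrix (Fin n) (Fin n) ℂ))
      = Complex.exp (c * μ) • (1 : Matrix (Fin n) (Fin n) ℂ) := by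
    erw [← Algebra.algebraMap_eq_smul_one, ← algebraMap_exp_comm, ← Complex.exp_eq_exp_ℂ,
      Algebra.algebraMap_eq_smul_one]
  erw [h2, mul_smul_comm, mul_one]
  rfl

lemma pow_div_factorial_le_exp {x : ℝ} (hx : 0 ≤ x) (k : ℕ) :
    x ^ k / k.factorial ≤ Real.exp x := by
  calc x ^ k / k.factorial ≤ ∑ i ∈ Finset.range (k + 1), x ^ i / i.factorial := by
        refine Finset.single_le_sum (f := fun i => x ^ i / (i.factorial : ℝ)) ?_ ?_
        · intro i _; positivity
        · simp
    _ ≤ Real.exp x := Real.sum_le_exp_of_nonneg hx _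

lemma genvec_bound (A : Matrix (Fin n) (Fin n) ℂ) (μ : ℂ) {δ : ℝ} (hδ : 0 < δ)
    (w : Fin n → ℂ) (K : ℕ) (hw : (A - μ • 1) ^ K *ᵥ w = 0) :
    ∃ C, 0 ≤ C ∧ ∀ s : ℝ, 0 ≤ s →
      ‖exp ((s : ℂ) • A) *ᵥ w‖ ≤ C * Real.exp ((μ.re + δ) * s) := by
  set N := A - μ • (1 : Matrix (Fin n) (Fin n) ℂ) with hN
  refine ⟨∑ k ∈ Finset.range K, ‖N ^ k *ᵥ w‖ / δ ^ k, by positivity, fun s hs => ?_⟩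
  rw [exp_smul_split A μ, Matrix.smul_mulVec, norm_smul,
    exp_mulVec_of_nilpotent_on hw]
  have h1 : ‖Complex.exp ((s : ℂ) * μ)‖ = Real.exp (s * μ.re) := by
    rw [Complex.norm_exp]; congr 1; simp
  rw [h1]
  calc Real.exp (s * μ.re) * ‖∑ k ∈ Finset.range K,
        ((s : ℂ) ^ k * (k.factorial : ℂ)⁻¹) • (N ^ k *ᵥ w)‖
      ≤ Real.exp (s * μ.re) * ∑ k ∈ Finset.range K,
          (s ^ k / k.factorial) * ‖N ^ k *ᵥ w‖ := by
        refine mul_le_mul_of_nonneg_left ?_ (Real.exp_nonneg _)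
        refine (norm_sum_le _ _).trans (Finset.sum_le_sum fun k _ => ?_)
        rw [norm_smul]
        refine mul_le_mul_of_nonneg_right (le_of_eq ?_) (norm_nonneg _)
        rw [norm_mul, norm_pow, norm_inv, Complex.norm_natCast, Complex.norm_real,
          Real.norm_eq_abs, abs_of_nonneg hs, div_eq_mul_inv]
    _ ≤ Real.exp (s * μ.re) * ∑ k ∈ Finset.range K,
          (‖N ^ k *ᵥ w‖ / δ ^ k) * Real.exp (δ * s) := by
        refine mul_le_mul_of_nonneg_left (Finset.sum_le_sum fun k _ => ?_) (Real.exp_nonneg _)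
        have h2 : s ^ k / k.factorial ≤ Real.exp (δ * s) / δ ^ k := by
          rw [le_div_iff₀ (by positivity)]
          have := pow_div_factorial_le_exp (x := δ * s) (by positivity) k
          calc s ^ k / (k.factorial : ℝ) * δ ^ k = (δ * s) ^ k / k.factorial := by
                rw [mul_pow]; ring
            _ ≤ Real.exp (δ * s) := this
        calc s ^ k / k.factorial * ‖N ^ k *ᵥ w‖
            ≤ (Real.exp (δ * s) / δ ^ k) * ‖N ^ k *ᵥ w‖ :=
              mul_le_mul_of_nonneg_right h2 (norm_nonneg _)
          _ = (‖N ^ k *ᵥ w‖ / δ ^ k) * Real.exp (δ * s) := by ring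
    _ = (∑ k ∈ Finset.range K, ‖N ^ k *ᵥ w‖ / δ ^ k) * Real.exp ((μ.re + δ) * s) := by
        rw [← Finset.sum_mul, add_mul, Real.exp_add, mul_left_comm, mul_comm s μ.re]

lemma vec_decay (A : Matrix (Fin n) (Fin n) ℂ) {ε : ℝ} (hε : 0 < ε)
    (hgap : ∀ μ ∈ spectrum ℂ A, μ.re ≤ -ε) (v : Fin n → ℂ) :
    ∃ C, 0 ≤ C ∧ ∀ s : ℝ, 0 ≤ s →
      ‖exp ((s : ℂ) • A) *ᵥ v‖ ≤ C * Real.exp (-(ε / 2) * s) := by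
  classical
  set e := Matrix.toLinAlgEquiv' (R := ℂ) (n := Fin n)
  set f : Module.End ℂ (Fin n → ℂ) := e A with hf
  have htop := Module.End.iSup_maxGenEigenspace_eq_top f
  have hv : v ∈ ⨆ μ : ℂ, f.maxGenEigenspace μ := htop ▸ Submodule.mem_top
  rw [Submodule.mem_iSup_iff_exists_finsupp] at hv
  obtain ⟨g, hg, hsum⟩ := hv
  have key : ∀ μ : ℂ, ∃ C, 0 ≤ C ∧ ∀ s : ℝ, 0 ≤ s →
      ‖exp ((s : ℂ) • A) *ᵥ (g μ)‖ ≤ C * Real.exp (-(ε / 2) * s) := by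
    intro μ
    by_cases h0 : g μ = 0
    · exact ⟨0, le_refl _, fun s hs => by simp [h0, Matrix.mulVec_zero]⟩
    · have hmem := hg μ
      rw [Module.End.mem_maxGenEigenspace] at hmem
      obtain ⟨K, hK⟩ := hmem
      have hKm : (A - μ • 1) ^ K *ᵥ (g μ) = 0 := by
        have : e ((A - μ • 1) ^ K) = (f - μ • 1) ^ K := by
          rw [map_pow, map_sub, _root_.map_smul, _root_.map_one]
        have h2 : e ((A - μ • 1) ^ K) (g μ) = 0 := by rw [this]; exact hK
        rwa [Matrix.toLinAlgEquiv'_apply] at h2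
      have hspec : μ ∈ spectrum ℂ A := by
        have hgen : f.HasGenEigenvalue μ (Module.finrank ℂ (Fin n → ℂ)) := by
          rw [Module.End.HasGenEigenvalue]
          refine Submodule.ne_bot_iff _ |>.mpr ⟨g μ, ?_, h0⟩
          rw [← Module.End.maxGenEigenspace_eq_genEigenspace_finrank]
          exact hg μ
        have heig := Module.End.hasEigenvalue_of_hasGenEigenvalue hgen
        have := heig.mem_spectrum
        rwa [AlgEquiv.spectrum_eq e A] at this
      obtain ⟨C, hC0, hC⟩ := genvec_bound A μ (half_pos hε) (g μ) K hKm
      refine ⟨C, hC0, fun s hs => (hC s hs).trans ?_⟩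
      refine mul_le_mul_of_nonneg_left (Real.exp_le_exp.mpr ?_) hC0
      have := hgap μ hspec
      nlinarith
  choose C hC0 hC using key
  refine ⟨∑ μ ∈ g.support, C μ, Finset.sum_nonneg fun μ _ => hC0 μ, fun s hs => ?_⟩
  have hvs : v = ∑ μ ∈ g.support, g μ := by rw [← hsum]; rfl
  have hexp : exp ((s : ℂ) • A) *ᵥ v
      = ∑ μ ∈ g.support, exp ((s : ℂ) • A) *ᵥ (g μ) := by
    rw [hvs, ← Matrix.mulVecLin_apply, map_sum]
    simp [Matrix.mulVecLin_apply]
  rw [hexp, Finset.sum_mul]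
  exact (norm_sum_le _ _).trans (Finset.sum_le_sum fun μ _ => hC μ s hs)

lemma entry_le_linfty {𝕜 : Type*} [RCLike 𝕜] (M : Matrix (Fin n) (Fin n) 𝕜)
    (i j : Fin n) : ‖M i j‖ ≤ ‖M‖ := by
  rw [Matrix.linfty_opNorm_def]
  have h1 : ‖M i j‖₊ ≤ ∑ j', ‖M i j'‖₊ :=
    Finset.single_le_sum (f := fun j' => ‖M i j'‖₊) (fun _ _ => zero_le) (Finset.mem_univ j)
  have h2 : (∑ j', ‖M i j'‖₊) ≤ Finset.univ.sup (fun i => ∑ j', ‖M i j'‖₊) :=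
    Finset.le_sup (f := fun i => ∑ j', ‖M i j'‖₊) (Finset.mem_univ i)
  exact_mod_cast h1.trans h2

lemma linfty_le_sum_cols (E : Matrix (Fin n) (Fin n) ℂ) :
    ‖E‖ ≤ ∑ j, ‖E *ᵥ Pi.single j 1‖ := by
  rw [Matrix.linfty_opNorm_def]
  have : (Finset.univ.sup fun i => ∑ j, ‖E i j‖₊) ≤ ∑ j, ‖E *ᵥ Pi.single j 1‖₊ := by
    refine Finset.sup_le fun i _ => Finset.sum_le_sum fun j _ => ?_
    have h1 : ‖E i j‖₊ = ‖(E *ᵥ Pi.single j 1) i‖₊ := by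
      simp [Matrix.mulVec_single_one]
    rw [h1]
    exact_mod_cast norm_le_pi_norm (E *ᵥ Pi.single j 1) i
  calc ((Finset.univ.sup fun i => ∑ j, ‖E i j‖₊ : NNReal) : ℝ)
      ≤ ((∑ j, ‖E *ᵥ Pi.single j 1‖₊ : NNReal) : ℝ) := by exact_mod_cast this
    _ = ∑ j, ‖E *ᵥ Pi.single j 1‖ := by push_cast; rfl

lemma spectrum_gap (A : Matrix (Fin n) (Fin n) ℂ) (hA : ∀ μ ∈ spectrum ℂ A, μ.re < 0) :
    ∃ ε : ℝ, 0 < ε ∧ ∀ μ ∈ spectrum ℂ A, μ.re ≤ -ε := by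
  classical
  have hfin := Matrix.finite_spectrum A
  rcases Set.eq_empty_or_nonempty (spectrum ℂ A) with h | h
  · exact ⟨1, one_pos, fun μ hμ => by rw [h] at hμ; exact absurd hμ (Set.notMem_empty μ)⟩
  · obtain ⟨ν, hν⟩ := h
    have hne : (hfin.toFinset.image Complex.re).Nonempty :=
      ⟨ν.re, Finset.mem_image.mpr ⟨ν, hfin.mem_toFinset.mpr hν, rfl⟩⟩
    refine ⟨-((hfin.toFinset.image Complex.re).max' hne), ?_, fun μ hμ => ?_⟩
    · obtain ⟨μ, hμ, hμ2⟩ :=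
        Finset.mem_image.mp ((hfin.toFinset.image Complex.re).max'_mem hne)
      rw [hfin.mem_toFinset] at hμ
      have := hA μ hμ
      rw [← hμ2]
      linarith
    · rw [neg_neg]
      exact Finset.le_max' _ _ (Finset.mem_image.mpr ⟨μ, hfin.mem_toFinset.mpr hμ, rfl⟩)

lemma map_ofReal_norm_eq (M : Matrix (Fin n) (Fin n) ℝ) :
    ‖M.map (Complex.ofReal ·)‖ = ‖M‖ := by
  rw [Matrix.linfty_opNorm_def, Matrix.linfty_opNorm_def]
  congr 1
  refine Finset.sup_congr rfl fun i _ => Finset.sum_congr rfl fun j _ => ?_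
  simp [Matrix.map_apply]

lemma exp_map_ofReal (m : Matrix (Fin n) (Fin n) ℝ) (s : ℝ) :
    (exp (s • m)).map (Complex.ofReal ·)
      = exp ((s : ℂ) • m.map (Complex.ofReal ·)) := by
  have hcont : Continuous fun M : Matrix (Fin n) (Fin n) ℝ =>
      (Complex.ofRealHom.mapMatrix M : Matrix (Fin n) (Fin n) ℂ) := by
    refine continuous_matrix fun i j => Complex.continuous_ofReal.comp ?_
    exact (continuous_apply j).comp (continuous_apply i)
  have h1 := map_exp (Complex.ofRealHom.mapMatrix (m := Fin n)) hcont (s • m)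
  have h2 : (Complex.ofRealHom.mapMatrix (s • m) : Matrix (Fin n) (Fin n) ℂ)
      = (s : ℂ) • m.map (Complex.ofReal ·) := by
    ext i j
    simp [RingHom.mapMatrix_apply, Matrix.map_apply]
  have h3 : exp ((s : ℂ) • m.map (Complex.ofReal ·))
      = exp ((s : ℂ) • m.map (Complex.ofReal ·)) := by
    rfl
  calc (exp (s • m)).map (Complex.ofReal ·)
      = Complex.ofRealHom.mapMatrix (exp (s • m)) := rfl
    _ = exp ((s : ℂ) • m.map (Complex.ofReal ·)) := by erw [h1, h2]; rfl
    _ = exp ((s : ℂ) • m.map (Complex.ofReal ·)) := h3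

lemma exp_real_decay (m : Matrix (Fin n) (Fin n) ℝ)
    (hm : ∀ μ ∈ spectrum ℂ (m.map (Complex.ofReal ·)), μ.re < 0) :
    ∃ ε C : ℝ, 0 < ε ∧ 0 ≤ C ∧ ∀ s : ℝ, 0 ≤ s →
      ‖exp (s • m)‖ ≤ C * Real.exp (-ε * s) := by
  obtain ⟨ε, hε, hgap⟩ := spectrum_gap _ hm
  set A := m.map (Complex.ofReal ·) with hA
  have hcol : ∀ j : Fin n, ∃ C, 0 ≤ C ∧ ∀ s : ℝ, 0 ≤ s →
      ‖exp ((s : ℂ) • A) *ᵥ Pi.single j 1‖ ≤ C * Real.exp (-(ε / 2) * s) :=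
    fun j => vec_decay A hε hgap _
  choose C hC0 hC using hcol
  refine ⟨ε / 2, ∑ j, C j, half_pos hε, Finset.sum_nonneg fun j _ => hC0 j, fun s hs => ?_⟩
  have h1 : ‖exp (s • m)‖ = ‖exp ((s : ℂ) • A)‖ := by
    rw [← map_ofReal_norm_eq, exp_map_ofReal]
  rw [h1, Finset.sum_mul]
  exact (linfty_le_sum_cols _).trans (Finset.sum_le_sum fun j _ => hC j s hs)

lemma spectrum_transpose (A : Matrix (Fin n) (Fin n) ℂ) :
    spectrum ℂ Aᵀ = spectrum ℂ A := by
  ext μ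
  simp only [spectrum.mem_iff, not_iff_not]
  have h : algebraMap ℂ (Matrix (Fin n) (Fin n) ℂ) μ - Aᵀ
      = (algebraMap ℂ (Matrix (Fin n) (Fin n) ℂ) μ - A)ᵀ := by
    rw [Matrix.transpose_sub, Algebra.algebraMap_eq_smul_one, Matrix.transpose_smul,
      Matrix.transpose_one]
  rw [h, Matrix.isUnit_iff_isUnit_det, Matrix.det_transpose, ← Matrix.isUnit_iff_isUnit_det]

lemma both_decay (m : Matrix (Fin n) (Fin n) ℝ)
    (hm : ∀ μ ∈ spectrum ℂ (m.map (Complex.ofReal ·)), μ.re < 0) :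
    ∃ ε C : ℝ, 0 < ε ∧ 0 < C ∧ ∀ s : ℝ, 0 ≤ s →
      ‖exp (s • m)‖ ≤ C * Real.exp (-ε * s) ∧
      ‖exp (s • mᵀ)‖ ≤ C * Real.exp (-ε * s) := by
  obtain ⟨ε₁, C₁, hε₁, hC₁0, hC₁⟩ := exp_real_decay m hm
  have hmT : ∀ μ ∈ spectrum ℂ (mᵀ.map (Complex.ofReal ·)), μ.re < 0 := by
    intro μ hμ
    apply hm μ
    rwa [Matrix.transpose_map, spectrum_transpose] at hμ
  obtain ⟨ε₂, C₂, hε₂, hC₂0, hC₂⟩ := exp_real_decay mᵀ hmT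
  refine ⟨min ε₁ ε₂, max C₁ C₂ + 1, lt_min hε₁ hε₂, by positivity, fun s hs => ?_⟩
  have he1 : Real.exp (-ε₁ * s) ≤ Real.exp (-(min ε₁ ε₂) * s) := by
    apply Real.exp_le_exp.mpr; nlinarith [min_le_left ε₁ ε₂]
  have he2 : Real.exp (-ε₂ * s) ≤ Real.exp (-(min ε₁ ε₂) * s) := by
    apply Real.exp_le_exp.mpr; nlinarith [min_le_right ε₁ ε₂]
  constructor
  · refine (hC₁ s hs).trans ?_
    have := Real.exp_nonneg (-(min ε₁ ε₂) * s)
    nlinarith [le_max_left C₁ C₂, Real.exp_nonneg (-ε₁ * s)]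
  · refine (hC₂ s hs).trans ?_
    have := Real.exp_nonneg (-(min ε₁ ε₂) * s)
    nlinarith [le_max_right C₁ C₂, Real.exp_nonneg (-ε₂ * s)]
lemma entry_hasDerivAt {f : ℝ → Matrix (Fin n) (Fin n) ℝ} {f' : Matrix (Fin n) (Fin n) ℝ}
    {s : ℝ} (h : HasDerivAt f f' s) (i j : Fin n) :
    HasDerivAt (fun u => f u i j) (f' i j) s := by
  let e : Matrix (Fin n) (Fin n) ℝ →L[ℝ] ℝ :=
    LinearMap.toContinuousLinearMap
      ((LinearMap.proj j).comp (LinearMap.proj (R := ℝ) (φ := fun _ : Fin n => Fin n → ℝ) i))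
  exact e.hasFDerivAt.comp_hasDerivAt s h

/-- for a Hurwitz matrix `m`, the integral `ς_∞ = ∫₀^∞ e^{s m} σ² e^{s mᵀ} ds`
converges entrywise absolutely, solves the Lyapunov equation `m ς_∞ + ς_∞ mᵀ + σ² = 0`, and
for every `β` the matrix `β ς_∞` is the unique solution of `m x̄ + x̄ mᵀ = −β σ²`. -/
theorem wishart_stationary_lyapunov
    (n : ℕ) (hn : 1 ≤ n) (m σ : Matrix (Fin n) (Fin n) ℝ) (hσ : σ.IsSymm)
    (hm : ∀ μ ∈ spectrum ℂ (m.map (Complex.ofReal · )), μ.re < 0)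
    (ςinf : Matrix (Fin n) (Fin n) ℝ)
    (hςinf : ∀ i j, ςinf i j =
      ∫ s in Set.Ioi (0 : ℝ),
        (NormedSpace.exp (s • m) * σ ^ 2 * NormedSpace.exp (s • mᵀ)) i j) :
    (∀ i j, IntegrableOn
        (fun s : ℝ => (NormedSpace.exp (s • m) * σ ^ 2 * NormedSpace.exp (s • mᵀ)) i j)
        (Set.Ioi (0 : ℝ)) volume) ∧
      m * ςinf + ςinf * mᵀ + σ ^ 2 = 0 ∧
      ∀ β : ℝ, ∀ x : Matrix (Fin n) (Fin n) ℝ,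
        m * x + x * mᵀ = -(β • σ ^ 2) ↔ x = β • ςinf := by
  classical
  obtain ⟨ε, C, hε, hC, hb⟩ := both_decay m hm
  set F : ℝ → Matrix (Fin n) (Fin n) ℝ :=
    fun s => NormedSpace.exp (s • m) * σ ^ 2 * NormedSpace.exp (s • mᵀ) with hF
  set K : ℝ := C * ‖σ ^ 2‖ * C with hK
  have hK0 : 0 ≤ K := by positivity
  have hFnorm : ∀ s : ℝ, 0 ≤ s → ‖F s‖ ≤ K * Real.exp (-(2 * ε) * s) := by
    intro s hs
    obtain ⟨h1, h2⟩ := hb s hs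
    calc ‖F s‖ ≤ ‖NormedSpace.exp (s • m) * σ ^ 2‖ * ‖NormedSpace.exp (s • mᵀ)‖ :=
          norm_mul_le _ _
      _ ≤ (‖NormedSpace.exp (s • m)‖ * ‖σ ^ 2‖) * ‖NormedSpace.exp (s • mᵀ)‖ :=
          mul_le_mul_of_nonneg_right (norm_mul_le _ _) (norm_nonneg _)
      _ ≤ (C * Real.exp (-ε * s) * ‖σ ^ 2‖) * (C * Real.exp (-ε * s)) := by
          refine mul_le_mul (mul_le_mul_of_nonneg_right h1 (norm_nonneg _)) h2 (norm_nonneg _) ?_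
          positivity
      _ = K * (Real.exp (-ε * s) * Real.exp (-ε * s)) := by rw [hK]; ring
      _ = K * Real.exp (-(2 * ε) * s) := by rw [← Real.exp_add]; ring_nf
  have hexpc1 : Continuous fun s : ℝ => NormedSpace.exp (s • m) :=
    exp_continuous.comp (continuous_id.smul continuous_const)
  have hexpc2 : Continuous fun s : ℝ => NormedSpace.exp (s • mᵀ) :=
    exp_continuous.comp (continuous_id.smul continuous_const)
  have hFc : Continuous F := (hexpc1.mul continuous_const).mul hexpc2
  have hInt : ∀ (G : ℝ → Matrix (Fin n) (Fin n) ℝ) (K' : ℝ), Continuous G →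
      (∀ s : ℝ, 0 ≤ s → ‖G s‖ ≤ K' * Real.exp (-(2 * ε) * s)) → ∀ i j,
      IntegrableOn (fun s => G s i j) (Set.Ioi (0 : ℝ)) volume := by
    intro G K' hGc hGb i j
    have hig : IntegrableOn (fun s => K' * Real.exp (-(2 * ε) * s)) (Set.Ioi (0 : ℝ)) volume :=
      (exp_neg_integrableOn_Ioi 0 (by positivity)).const_mul K'
    refine hig.mono' ?_ ?_
    · exact ((continuous_apply j).comp ((continuous_apply i).comp hGc)).aestronglyMeasurable.restrict
    · rw [MeasureTheory.ae_restrict_iff' measurableSet_Ioi]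
      filter_upwards with s hs
      exact (entry_le_linfty (G s) i j).trans (hGb s hs.le)
  have hIntF : ∀ i j, IntegrableOn (fun s => F s i j) (Set.Ioi (0 : ℝ)) volume :=
    hInt F K hFc hFnorm
  have hcM : ∀ s : ℝ, m * NormedSpace.exp (s • m) = NormedSpace.exp (s • m) * m :=
    fun s => (((Commute.refl m).smul_right s).exp_right).eq
  have hcT : ∀ s : ℝ, mᵀ * NormedSpace.exp (s • mᵀ) = NormedSpace.exp (s • mᵀ) * mᵀ :=
    fun s => (((Commute.refl mᵀ).smul_right s).exp_right).eq
  have hFd : ∀ s : ℝ, HasDerivAt F (m * F s + F s * mᵀ) s := by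
    intro s
    have h1 := ((hasDerivAt_exp_smul_const' (𝕂 := ℝ) m s).mul_const (σ ^ 2)).mul
      (hasDerivAt_exp_smul_const' (𝕂 := ℝ) mᵀ s)
    convert h1 using 1
    · rfl
    · rfl
    · rfl
    · rfl
    erw [hcT s, hF]
    simp only [mul_assoc, mul_add, add_mul]
    rfl
  have hentryD : ∀ (i j : Fin n) (s : ℝ),
      HasDerivAt (fun u => F u i j) ((m * F s + F s * mᵀ) i j) s := by
    intro i j s
    exact entry_hasDerivAt (hFd s) i j
  have hDb : ∀ s : ℝ, 0 ≤ s →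
      ‖m * F s + F s * mᵀ‖ ≤ (‖m‖ * K + K * ‖mᵀ‖) * Real.exp (-(2 * ε) * s) := by
    intro s hs
    have h1 : ‖m * F s‖ ≤ ‖m‖ * ‖F s‖ := norm_mul_le _ _
    have h2 : ‖F s * mᵀ‖ ≤ ‖F s‖ * ‖mᵀ‖ := norm_mul_le _ _
    have h3 := hFnorm s hs
    have h4 := norm_add_le (m * F s) (F s * mᵀ)
    have h5 : (0 : ℝ) ≤ Real.exp (-(2 * ε) * s) := Real.exp_nonneg _
    nlinarith [norm_nonneg (F s), norm_nonneg m, norm_nonneg (mᵀ)]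
  have hDc : Continuous fun s => m * F s + F s * mᵀ :=
    (continuous_const.mul hFc).add (hFc.mul continuous_const)
  have hIntD : ∀ i j, IntegrableOn (fun s => (m * F s + F s * mᵀ) i j)
      (Set.Ioi (0 : ℝ)) volume := hInt _ _ hDc hDb
  have hgz : ∀ K' : ℝ, Filter.Tendsto (fun s : ℝ => K' * Real.exp (-(2 * ε) * s))
      Filter.atTop (nhds 0) := by
    intro K'
    have h1 : Filter.Tendsto (fun s : ℝ => (2 * ε) * s) Filter.atTop Filter.atTop :=
      Filter.Tendsto.const_mul_atTop (by positivity) Filter.tendsto_id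
    have h2 := Real.tendsto_exp_neg_atTop_nhds_zero.comp h1
    have h3 : ((fun x : ℝ => Real.exp (-x)) ∘ fun s : ℝ => (2 * ε) * s)
        = fun s : ℝ => Real.exp (-(2 * ε) * s) := by funext s; simp [neg_mul]
    rw [h3] at h2
    simpa using h2.const_mul K'
  have htend : ∀ i j, Filter.Tendsto (fun s => F s i j) Filter.atTop (nhds 0) := by
    intro i j
    refine squeeze_zero_norm' ?_ (hgz K)
    filter_upwards [Filter.eventually_ge_atTop (0 : ℝ)] with s hs
    exact (entry_le_linfty (F s) i j).trans (hFnorm s hs)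
  have hF0 : F 0 = σ ^ 2 := by
    rw [hF]
    simp [NormedSpace.exp_zero]
  have hIod : ∀ i j, ∫ s in Set.Ioi (0 : ℝ), (m * F s + F s * mᵀ) i j = 0 - F 0 i j := by
    intro i j
    exact MeasureTheory.integral_Ioi_of_hasDerivAt_of_tendsto
      ((continuous_apply j).comp ((continuous_apply i).comp hFc)).continuousWithinAt
      (fun s _ => hentryD i j s) (hIntD i j) (htend i j)
  have hIntmF : ∀ i j, IntegrableOn (fun s => (m * F s) i j) (Set.Ioi (0 : ℝ)) volume := by
    refine hInt _ (‖m‖ * K) (continuous_const.mul hFc) ?_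
    intro s hs
    calc ‖m * F s‖ ≤ ‖m‖ * ‖F s‖ := norm_mul_le _ _
      _ ≤ ‖m‖ * (K * Real.exp (-(2 * ε) * s)) :=
          mul_le_mul_of_nonneg_left (hFnorm s hs) (norm_nonneg _)
      _ = ‖m‖ * K * Real.exp (-(2 * ε) * s) := by ring
  have hIntFm : ∀ i j, IntegrableOn (fun s => (F s * mᵀ) i j) (Set.Ioi (0 : ℝ)) volume := by
    refine hInt _ (K * ‖mᵀ‖) (hFc.mul continuous_const) ?_
    intro s hs
    calc ‖F s * mᵀ‖ ≤ ‖F s‖ * ‖mᵀ‖ := norm_mul_le _ _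
      _ ≤ K * Real.exp (-(2 * ε) * s) * ‖mᵀ‖ :=
          mul_le_mul_of_nonneg_right (hFnorm s hs) (norm_nonneg _)
      _ = K * ‖mᵀ‖ * Real.exp (-(2 * ε) * s) := by ring
  have hlyap : m * ςinf + ςinf * mᵀ + σ ^ 2 = 0 := by
    ext i j
    have h1 : (m * ςinf) i j = ∫ s in Set.Ioi (0 : ℝ), (m * F s) i j := by
      rw [Matrix.mul_apply]
      calc ∑ k, m i k * ςinf k j
          = ∑ k, ∫ s in Set.Ioi (0 : ℝ), m i k * F s k j := by
            refine Finset.sum_congr rfl fun k _ => ?_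
            rw [hςinf k j, ← MeasureTheory.integral_const_mul]
        _ = ∫ s in Set.Ioi (0 : ℝ), ∑ k, m i k * F s k j :=
            (MeasureTheory.integral_finset_sum Finset.univ
              fun k _ => ((hIntF k j).const_mul _)).symm
        _ = ∫ s in Set.Ioi (0 : ℝ), (m * F s) i j := by
            refine congrArg _ (funext fun s => ?_)
            rw [Matrix.mul_apply]
    have h2 : (ςinf * mᵀ) i j = ∫ s in Set.Ioi (0 : ℝ), (F s * mᵀ) i j := by
      rw [Matrix.mul_apply]
      calc ∑ k, ςinf i k * mᵀ k j
          = ∑ k, ∫ s in Set.Ioi (0 : ℝ), F s i k * mᵀ k j := by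
            refine Finset.sum_congr rfl fun k _ => ?_
            rw [hςinf i k, ← MeasureTheory.integral_mul_const]
        _ = ∫ s in Set.Ioi (0 : ℝ), ∑ k, F s i k * mᵀ k j :=
            (MeasureTheory.integral_finset_sum Finset.univ
              fun k _ => ((hIntF i k).mul_const _)).symm
        _ = ∫ s in Set.Ioi (0 : ℝ), (F s * mᵀ) i j := by
            refine congrArg _ (funext fun s => ?_)
            rw [Matrix.mul_apply]
    have h3 : (∫ s in Set.Ioi (0 : ℝ), (m * F s) i j)
        + (∫ s in Set.Ioi (0 : ℝ), (F s * mᵀ) i j)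
        = ∫ s in Set.Ioi (0 : ℝ), (m * F s + F s * mᵀ) i j := by
      rw [← MeasureTheory.integral_add (hIntmF i j) (hIntFm i j)]
      refine congrArg _ (funext fun s => ?_)
      rw [Matrix.add_apply]
    have h4 := hIod i j
    rw [hF0] at h4
    simp only [Matrix.add_apply, Matrix.zero_apply, h1, h2]
    rw [h3, h4]
    ring
  refine ⟨fun i j => hIntF i j, hlyap, ?_⟩
  intro β x
  have hneg : m * ςinf + ςinf * mᵀ = -(σ ^ 2) := eq_neg_of_add_eq_zero_left hlyap
  have hlyap' : m * (β • ςinf) + (β • ςinf) * mᵀ = -(β • σ ^ 2) := by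
    calc m * (β • ςinf) + (β • ςinf) * mᵀ = β • (m * ςinf + ςinf * mᵀ) := by
          rw [Matrix.mul_smul, Matrix.smul_mul, smul_add]
      _ = β • (-(σ ^ 2)) := by rw [hneg]
      _ = -(β • σ ^ 2) := by rw [smul_neg]
  constructor
  · intro hx
    set y := x - β • ςinf with hy
    have hy0 : m * y + y * mᵀ = 0 := by
      have h5 : m * y + y * mᵀ
          = (m * x + x * mᵀ) - (m * (β • ςinf) + (β • ςinf) * mᵀ) := by
        rw [hy, Matrix.mul_sub, Matrix.sub_mul]
        abel
      rw [h5, hx, hlyap', sub_self]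
    set g : ℝ → Matrix (Fin n) (Fin n) ℝ :=
      fun s => NormedSpace.exp (s • m) * y * NormedSpace.exp (s • mᵀ) with hg
    have hgd : ∀ s, HasDerivAt g 0 s := by
      intro s
      have h1 := ((hasDerivAt_exp_smul_const' (𝕂 := ℝ) m s).mul_const y).mul
        (hasDerivAt_exp_smul_const' (𝕂 := ℝ) mᵀ s)
      have h2 : m * NormedSpace.exp (s • m) * y * NormedSpace.exp (s • mᵀ)
          + NormedSpace.exp (s • m) * y * (mᵀ * NormedSpace.exp (s • mᵀ))
          = 0 := by
        rw [hcM s]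
        have e1 : NormedSpace.exp (s • m) * m * y * NormedSpace.exp (s • mᵀ)
            + NormedSpace.exp (s • m) * y * (mᵀ * NormedSpace.exp (s • mᵀ))
            = NormedSpace.exp (s • m) * ((m * y + y * mᵀ) * NormedSpace.exp (s • mᵀ)) := by
          simp only [add_mul, mul_add, mul_assoc]
        rw [e1, hy0, zero_mul, mul_zero]
      exact h2 ▸ h1
    have hgconst : ∀ s, g s = g 0 := fun s =>
      is_const_of_deriv_eq_zero (fun t => (hgd t).differentiableAt)
        (fun t => (hgd t).deriv) s 0
    have hg0 : g 0 = y := by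
      rw [hg]
      simp [NormedSpace.exp_zero]
    have htendg : Filter.Tendsto g Filter.atTop (nhds 0) := by
      refine squeeze_zero_norm' ?_ (hgz (C * ‖y‖ * C))
      filter_upwards [Filter.eventually_ge_atTop (0 : ℝ)] with s hs
      obtain ⟨h1, h2⟩ := hb s hs
      calc ‖g s‖ ≤ ‖NormedSpace.exp (s • m) * y‖ * ‖NormedSpace.exp (s • mᵀ)‖ :=
            norm_mul_le _ _
        _ ≤ (‖NormedSpace.exp (s • m)‖ * ‖y‖) * ‖NormedSpace.exp (s • mᵀ)‖ :=
            mul_le_mul_of_nonneg_right (norm_mul_le _ _) (norm_nonneg _)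
        _ ≤ (C * Real.exp (-ε * s) * ‖y‖) * (C * Real.exp (-ε * s)) := by
            refine mul_le_mul (mul_le_mul_of_nonneg_right h1 (norm_nonneg _)) h2
              (norm_nonneg _) ?_
            positivity
        _ = C * ‖y‖ * C * (Real.exp (-ε * s) * Real.exp (-ε * s)) := by ring
        _ = C * ‖y‖ * C * Real.exp (-(2 * ε) * s) := by rw [← Real.exp_add]; ring_nf
    have hgy : Filter.Tendsto g Filter.atTop (nhds y) := by
      have : g = fun _ => y := funext fun s => (hgconst s).trans hg0
      rw [this]
      exact tendsto_const_nhds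
    have hy' : y = 0 := tendsto_nhds_unique hgy htendg
    have h6 : x - β • ςinf = 0 := by rw [← hy]; exact hy'
    exact sub_eq_zero.mp h6
  · intro hx
    rw [hx]
    exact hlyap'
end

section
/- Let n ≥ 1, let ς be a real symmetric positive definite n×n matrix, let β ≥ n + 1, and let α > 0 be such that I_n − 2ας is invertible. Then the function u ↦ |det(I_n − 2(α − i u)ς)|^{−β/2} · |α − i u|^{−1} is Lebesgue integrable on ℝ; in particular, as u → +∞ this function decays at the rate u^{−(nβ/2 + 1)}. -/
open Matrix MeasureTheory Filter Topology

lemma det_one_sub_smul_eq_prod {n : ℕ} (ς : Matrix (Fin n) (Fin n) ℝ) (hH : ς.IsHermitian)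
    (w : ℂ) :
    (1 - w • ς.map (Complex.ofReal ·)).det = ∏ k, (1 - w * (hH.eigenvalues k : ℂ)) := by
  classical
  set U : Matrix (Fin n) (Fin n) ℝ := (hH.eigenvectorUnitary : Matrix (Fin n) (Fin n) ℝ) with hUdef
  have hU : U * star U = 1 := (Matrix.mem_unitaryGroup_iff).mp hH.eigenvectorUnitary.2
  have hspec : ς = U * diagonal (RCLike.ofReal ∘ hH.eigenvalues) * star U := hH.spectral_theorem
  set f : ℝ →+* ℂ := Complex.ofRealHom with hf
  have hmap : ς.map (Complex.ofReal ·) = (U.map f) * diagonal (fun k => (hH.eigenvalues k : ℂ)) * ((star U).map f) := by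
    have h2 := congrArg (fun A : Matrix (Fin n) (Fin n) ℝ => A.map f) hspec
    rw [Matrix.map_mul (f := f), Matrix.map_mul (f := f),
      Matrix.diagonal_map (by simp : f 0 = 0)] at h2
    convert h2 using 2 <;> rfl
  have hUc : (U.map f) * ((star U).map f) = 1 := by
    rw [← Matrix.map_mul, hU, Matrix.map_one f f.map_zero f.map_one]
  have key : 1 - w • ς.map (Complex.ofReal ·)
      = (U.map f) * (diagonal (fun k => 1 - w * (hH.eigenvalues k : ℂ))) * ((star U).map f) := by
    have hd : (diagonal (fun k => 1 - w * (hH.eigenvalues k : ℂ)))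
        = 1 - w • diagonal (fun k => (hH.eigenvalues k : ℂ)) := by
      ext i j
      rcases eq_or_ne i j with h|h
      · subst h
        simp [Matrix.diagonal_apply_eq, Matrix.one_apply_eq, Matrix.sub_apply]
      · simp [Matrix.diagonal_apply_ne _ h, Matrix.one_apply_ne h, Matrix.sub_apply]
    rw [hd, hmap, mul_sub, mul_one, sub_mul, hUc, Matrix.mul_smul, Matrix.smul_mul]
  rw [key, det_mul, det_mul, det_diagonal]
  calc (U.map f).det * (∏ k, (1 - w * (hH.eigenvalues k : ℂ))) * ((star U).map f).det
      = (∏ k, (1 - w * (hH.eigenvalues k : ℂ))) * ((U.map f).det * ((star U).map f).det) := by ring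
    _ = _ := by rw [← det_mul, hUc, det_one, mul_one]

/-- integrability of `u ↦ |det(I − 2(α − iu)ς)|^{−β/2} |α − iu|⁻¹` on `ℝ`
for a positive definite `ς` and `β ≥ n + 1`; moreover the function decays at the rate
`u^{−(nβ/2 + 1)}` as `u → +∞`. -/
theorem wishart_denominator_integrable
    (n : ℕ) (hn : 1 ≤ n) (ς : Matrix (Fin n) (Fin n) ℝ) (hς : ς.PosDef)
    (β : ℝ) (hβ : (n : ℝ) + 1 ≤ β) (α : ℝ) (hα : 0 < α)
    (hinv : IsUnit (1 - (2 * α) • ς)) :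
    Integrable
      (fun u : ℝ =>
        (norm
            ((1 - (2 * ((α : ℂ) - Complex.I * (u : ℂ))) •
              ς.map (Complex.ofReal · )).det)) ^ (-(β / 2)) *
          (norm ((α : ℂ) - Complex.I * (u : ℂ)))⁻¹) volume ∧
      ∃ c : ℝ, 0 < c ∧
        Tendsto
          (fun u : ℝ =>
            ((norm
                ((1 - (2 * ((α : ℂ) - Complex.I * (u : ℂ))) •
                  ς.map (Complex.ofReal · )).det)) ^ (-(β / 2)) *
              (norm ((α : ℂ) - Complex.I * (u : ℂ)))⁻¹) *
            u ^ ((n : ℝ) * β / 2 + 1))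
          atTop (𝓝 c) := by
  classical
  have hH : ς.IsHermitian := hς.1
  set ev : Fin n → ℝ := hH.eigenvalues with hevdef
  have hevpos : ∀ k, 0 < ev k := fun k => hς.eigenvalues_pos k
  set a : Fin n → ℝ := fun k => 1 - 2*α*ev k with hadef
  set b : Fin n → ℝ := fun k => 2*ev k with hbdef
  have hbpos : ∀ k, 0 < b k := fun k => by simp only [hbdef]; linarith [hevpos k]
  -- a k ≠ 0
  have hane : ∀ k, a k ≠ 0 := by
    have hdetR : (1 - (2 * α) • ς).det ≠ 0 :=
      ((Matrix.isUnit_iff_isUnit_det _).mp hinv).ne_zero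
    have hmapeq : (1 - (2 * α) • ς).map (Complex.ofReal ·)
        = 1 - ((2*(α:ℂ)) • ς.map (Complex.ofReal ·)) := by
      ext i j
      by_cases h : i = j <;>
        simp [h, Matrix.map_apply, Matrix.sub_apply, Matrix.smul_apply, Matrix.one_apply] <;>
        push_cast <;> ring
    have h3 : ((1 - (2 * α) • ς).map (Complex.ofReal ·)).det
        = (((1 - (2 * α) • ς).det : ℝ) : ℂ) := by
      exact (RingHom.map_det Complex.ofRealHom (1 - (2 * α) • ς)).symm
    have hdet2 : (∏ k, (1 - (2*(α:ℂ)) * (ev k : ℂ))) ≠ 0 := by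
      rw [← det_one_sub_smul_eq_prod ς hH (2*(α:ℂ)), ← hmapeq, h3]
      exact_mod_cast hdetR
    intro k
    rw [Finset.prod_ne_zero_iff] at hdet2
    have := hdet2 k (Finset.mem_univ k)
    intro hak
    apply this
    have h4 : ((1:ℂ) - 2*(α:ℂ)*(ev k:ℂ)) = (((1 - 2*α*ev k : ℝ)) : ℂ) := by
      push_cast
      ring
    rw [h4, show (1-2*α*ev k : ℝ) = a k from rfl, hak, Complex.ofReal_zero]
  have hpos : ∀ (u : ℝ) (k : Fin n), 0 < a k^2 + (b k*u)^2 := by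
    intro u k
    have h1 : 0 < a k ^ 2 :=
      lt_of_le_of_ne (sq_nonneg _) (Ne.symm (pow_ne_zero 2 (hane k)))
    nlinarith [sq_nonneg (b k * u)]
  -- modulus of scalar factors
  have habs : ∀ (u : ℝ) (k : Fin n),
      norm (1 - 2*((α:ℂ) - Complex.I*u) * (ev k : ℂ))
        = Real.sqrt (a k^2 + (b k*u)^2) := by
    intro u k
    rw [Complex.norm_def]
    congr 1
    simp [Complex.normSq_apply, hadef, hbdef]
    ring
  have hQ : ∀ u : ℝ, ‖(α:ℂ) - Complex.I*(u:ℂ)‖ = Real.sqrt (α^2+u^2) := by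
    intro u
    rw [Complex.norm_def]
    congr 1
    simp [Complex.normSq_apply]
    ring
  -- rewrite of the main function
  set G : ℝ → ℝ := fun u =>
    (∏ k, (a k^2 + (b k*u)^2) ^ (-(β/4))) * (Real.sqrt (α^2+u^2))⁻¹ with hGdef
  have hFG : (fun u : ℝ =>
        (norm
            ((1 - (2 * ((α : ℂ) - Complex.I * (u : ℂ))) •
              ς.map (Complex.ofReal · )).det)) ^ (-(β / 2)) *
          (norm ((α : ℂ) - Complex.I * (u : ℂ)))⁻¹) = G := by
    funext u
    rw [det_one_sub_smul_eq_prod ς hH (2*((α:ℂ) - Complex.I*(u:ℂ))), norm_prod, hQ u, hGdef]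
    congr 1
    rw [← Real.finset_prod_rpow _ _ (fun k _ => norm_nonneg _) (-(β/2))]
    refine Finset.prod_congr rfl fun k _ => ?_
    rw [habs u k, Real.sqrt_eq_rpow, ← Real.rpow_mul (hpos u k).le]
    congr 1
    ring
  have hGcont : Continuous G := by
    apply Continuous.mul
    · apply continuous_finset_prod
      intro k _
      exact Continuous.rpow_const (by fun_prop) fun u => Or.inl (ne_of_gt (hpos u k))
    · exact Continuous.inv₀ (Real.continuous_sqrt.comp (by fun_prop))
        fun u => ne_of_gt (Real.sqrt_pos.mpr (by positivity))
  have hGnonneg : ∀ u, 0 ≤ G u := by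
    intro u
    apply mul_nonneg
    · exact Finset.prod_nonneg fun k _ => Real.rpow_nonneg (le_of_lt (hpos u k)) _
    · positivity
  have h1n : (1:ℝ) ≤ n := by exact_mod_cast hn
  have hβ2 : (2:ℝ) ≤ β := by linarith
  have hnβ2 : (2:ℝ) ≤ (n:ℝ)*β := by nlinarith
  constructor
  · rw [hFG]
    set m0 : ℝ := min (α^2) 1 with hm0def
    have hm0 : 0 < m0 := lt_min (by positivity) one_pos
    set m : Fin n → ℝ := fun k => min (a k^2) (b k^2) with hmdef
    have hm : ∀ k, 0 < m k := fun k =>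
      lt_min (lt_of_le_of_ne (sq_nonneg _) (Ne.symm (pow_ne_zero 2 (hane k))))
        (pow_pos (hbpos k) 2)
    set K : ℝ := (∏ k, m k ^ (-(β/4))) * (Real.sqrt m0)⁻¹ with hKdef
    have hK : 0 ≤ K := mul_nonneg
      (Finset.prod_nonneg fun k _ => Real.rpow_nonneg (hm k).le _) (by positivity)
    refine Integrable.mono' ((integrable_inv_one_add_sq).const_mul K)
      hGcont.aestronglyMeasurable (ae_of_all _ fun u => ?_)
    rw [Real.norm_eq_abs, abs_of_nonneg (hGnonneg u)]
    have step1 : ∀ k : Fin n, (a k^2 + (b k*u)^2) ^ (-(β/4))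
        ≤ m k ^ (-(β/4)) * (1+u^2) ^ (-(β/4)) := by
      intro k
      have hle : m k * (1+u^2) ≤ a k^2 + (b k*u)^2 := by
        have h1 := min_le_left (a k^2) (b k^2)
        have h2 := min_le_right (a k^2) (b k^2)
        have h3 : (b k * u)^2 = b k^2 * u^2 := by ring
        have hmk : m k = a k^2 ⊓ b k^2 := rfl
        rw [hmk]
        nlinarith [sq_nonneg u, (hm k).le]
      calc (a k^2 + (b k*u)^2) ^ (-(β/4))
          ≤ (m k * (1+u^2)) ^ (-(β/4)) :=
            Real.rpow_le_rpow_of_nonpos (mul_pos (hm k) (by positivity)) hle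
              (by linarith)
        _ = m k ^ (-(β/4)) * (1+u^2) ^ (-(β/4)) :=
            Real.mul_rpow (hm k).le (by positivity)
    have step2 : (Real.sqrt (α^2+u^2))⁻¹ ≤ (Real.sqrt m0)⁻¹ * (Real.sqrt (1+u^2))⁻¹ := by
      rw [← mul_inv, ← Real.sqrt_mul hm0.le]
      apply inv_anti₀
      · exact Real.sqrt_pos.mpr (by positivity)
      · apply Real.sqrt_le_sqrt
        have h1 := min_le_left (α^2) (1:ℝ)
        have h2 := min_le_right (α^2) (1:ℝ)
        rw [← hm0def] at h1 h2
        nlinarith [sq_nonneg u, hm0.le]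
    calc G u ≤ (∏ k, m k ^ (-(β/4)) * (1+u^2) ^ (-(β/4)))
          * ((Real.sqrt m0)⁻¹ * (Real.sqrt (1+u^2))⁻¹) := by
          apply mul_le_mul
          · exact Finset.prod_le_prod
              (fun k _ => Real.rpow_nonneg (hpos u k).le _) (fun k _ => step1 k)
          · exact step2
          · positivity
          · exact Finset.prod_nonneg fun k _ =>
              mul_nonneg (Real.rpow_nonneg (hm k).le _) (Real.rpow_nonneg (by positivity) _)
      _ = K * ((1+u^2) ^ (-(β/4) * n) * (Real.sqrt (1+u^2))⁻¹) := by
          rw [Finset.prod_mul_distrib, Finset.prod_const, Finset.card_univ, Fintype.card_fin,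
            ← Real.rpow_natCast ((1+u^2) ^ (-(β/4))) n, ← Real.rpow_mul (by positivity), hKdef]
          ring
      _ ≤ K * (1+u^2)⁻¹ := by
          apply mul_le_mul_of_nonneg_left ?_ hK
          rw [Real.sqrt_eq_rpow, ← Real.rpow_neg (by positivity),
            ← Real.rpow_add (by positivity)]
          calc (1+u^2) ^ (-(β/4) * n + -(1/2))
              ≤ (1+u^2) ^ (-1 : ℝ) := by
                apply Real.rpow_le_rpow_of_exponent_le (by nlinarith [sq_nonneg u])
                nlinarith
            _ = (1+u^2)⁻¹ := Real.rpow_neg_one _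
  · -- the limit
    set c0 : ℝ := ∏ k, (b k^2) ^ (-(β/4)) with hc0def
    have hc0 : 0 < c0 :=
      Finset.prod_pos fun k _ => Real.rpow_pos_of_pos (pow_pos (hbpos k) 2) _
    set H : ℝ → ℝ := fun u =>
      (∏ k, (a k^2/u^2 + b k^2) ^ (-(β/4))) * (Real.sqrt (α^2/u^2 + 1))⁻¹ with hHdef
    have husq : Tendsto (fun u : ℝ => (u^2)⁻¹) atTop (𝓝 0) := by
      have h0 : Tendsto (fun u : ℝ => u^2) atTop atTop :=
        tendsto_pow_atTop (by norm_num)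
      simpa [Pi.inv_def] using h0.inv_tendsto_atTop
    have hdiv : ∀ β0 : ℝ, Tendsto (fun u : ℝ => β0/u^2) atTop (𝓝 0) := by
      intro β0
      simp only [div_eq_mul_inv]
      simpa using husq.const_mul β0
    have hsndlim : Tendsto (fun u : ℝ => (Real.sqrt (α^2/u^2 + 1))⁻¹) atTop (𝓝 1) := by
      have h1 : Tendsto (fun u : ℝ => α^2/u^2 + 1) atTop (𝓝 1) := by
        simpa using (hdiv (α^2)).add tendsto_const_nhds
      have h2 : Tendsto (fun u : ℝ => Real.sqrt (α^2/u^2 + 1)) atTop (𝓝 1) := by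
        simpa [Function.comp_def] using (Real.continuous_sqrt.tendsto 1).comp h1
      simpa using h2.inv₀ one_ne_zero
    have hprodlim : Tendsto (fun u : ℝ => ∏ k, (a k^2/u^2 + b k^2) ^ (-(β/4)))
        atTop (𝓝 c0) := by
      rw [hc0def]
      apply tendsto_finset_prod
      intro k _
      have h1 : Tendsto (fun u : ℝ => a k^2/u^2 + b k^2) atTop (𝓝 (b k^2)) := by
        simpa using (hdiv (a k^2)).add tendsto_const_nhds
      exact ((Real.continuousAt_rpow_const _ _
        (Or.inl (ne_of_gt (pow_pos (hbpos k) 2)))).tendsto.comp h1)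
    have hHlim : Tendsto H atTop (𝓝 c0) := by
      simpa using hprodlim.mul hsndlim
    have hEq : ∀ u : ℝ, 0 < u → H u = G u * u ^ ((n:ℝ)*β/2+1) := by
      intro u hu
      have hu0 : u ≠ 0 := ne_of_gt hu
      have h2 : ((u^2)⁻¹ : ℝ) = u ^ (-2 : ℝ) := by
        rw [show (-2:ℝ) = ((-2:ℤ):ℝ) by norm_num, Real.rpow_intCast, _root_.zpow_neg]
        norm_cast
      have hfac : ∀ k : Fin n, (a k^2/u^2 + b k^2) ^ (-(β/4))
          = (a k^2 + (b k*u)^2) ^ (-(β/4)) * u ^ (β/2) := by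
        intro k
        have h1 : a k^2/u^2 + b k^2 = (a k^2 + (b k*u)^2) * (u^2)⁻¹ := by
          field_simp
        rw [h1, Real.mul_rpow (hpos u k).le (by positivity), h2,
          ← Real.rpow_mul hu.le]
        congr 1
        ring
      have hsnd : (Real.sqrt (α^2/u^2 + 1))⁻¹ = (Real.sqrt (α^2+u^2))⁻¹ * u := by
        have h1 : α^2/u^2+1 = (α^2+u^2)/u^2 := by field_simp
        rw [h1, Real.sqrt_div (by positivity), Real.sqrt_sq hu.le, inv_div,
          div_eq_mul_inv, mul_comm]
      calc H u = (∏ k, ((a k^2 + (b k*u)^2) ^ (-(β/4)) * u ^ (β/2)))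
            * ((Real.sqrt (α^2+u^2))⁻¹ * u) := by
            show (∏ k, (a k^2/u^2 + b k^2) ^ (-(β/4))) * (Real.sqrt (α^2/u^2 + 1))⁻¹ = _
            rw [Finset.prod_congr rfl fun k _ => hfac k, hsnd]
        _ = ((∏ k, (a k^2 + (b k*u)^2) ^ (-(β/4))) * u ^ ((β/2) * n))
            * ((Real.sqrt (α^2+u^2))⁻¹ * u) := by
            rw [Finset.prod_mul_distrib, Finset.prod_const, Finset.card_univ, Fintype.card_fin,
              ← Real.rpow_natCast (u ^ (β/2)) n, ← Real.rpow_mul hu.le]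
        _ = G u * u ^ ((n:ℝ)*β/2+1) := by
            show _ = (∏ k, (a k^2 + (b k*u)^2) ^ (-(β/4))) * (Real.sqrt (α^2+u^2))⁻¹
              * u ^ ((n:ℝ)*β/2+1)
            rw [Real.rpow_add hu, Real.rpow_one,
              show ((β/2) * (n:ℝ)) = (n:ℝ)*β/2 by ring]
            ring
    refine ⟨c0, hc0, ?_⟩
    have htend : Tendsto (fun u : ℝ => G u * u ^ ((n:ℝ)*β/2+1)) atTop (𝓝 c0) := by
      apply hHlim.congr'
      filter_upwards [eventually_gt_atTop 0] with u hu
      exact hEq u hu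
    exact htend.congr fun u => by rw [← congrFun hFG u]
end
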